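/- arXiv:1708.00233 — 9 statements merged into one kernel-verified Lean document; each statement's English description precedes it below -/
import Mathlib

section
/- Conditioned generating function. For every i ∈ 𝕏, every s ∈ [0,1] and every n ≥ 1, one has 𝔼_i(s^{Z_n} | X_1, …, X_n) = f_{X_1} ∘ ⋯ ∘ f_{X_n}(s), ℙ_i-almost surely (with the convention s^0 = 1 and 0^0 = 1). -/
/-!
On the atom `{(X₁, …, Xₙ) = y}` of the finite σ-algebra `σ(X₁, …, Xₙ)`, the population `Zₙ`
coincides with the branching process `Wʸ` driven by the deterministic environment `y`. Since `Wʸ`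
is a function of the offspring array alone, it is independent of the chain, so
`𝔼[s^{Zₙ}; (X₁, …, Xₙ) = y] = ℙ((X₁, …, Xₙ) = y) · 𝔼 s^{Wʸₙ}`, which identifies the conditional
expectation atom by atom.

The quenched generating function is computed by conditioning on the previous generation: given
`Wʸₖ = m`, `Wʸₖ₊₁` is a sum of `m` i.i.d. copies of `ξ_{y_{k+1}}` that are independent of `Wʸₖ`,
so `𝔼 t^{Wʸₖ₊₁} = 𝔼 (f_{y_{k+1}}(t))^{Wʸₖ}`, and induction on `n` gives
`𝔼 s^{Wʸₙ} = f_{y₁} ∘ ⋯ ∘ f_{yₙ}(s)`.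
-/

open Finset Filter MeasureTheory ProbabilityTheory

namespace Stmt4

variable {𝕏 : Type*}

/-- probability generating function of the pmf `μ i`. -/
noncomputable def pgf (μ : 𝕏 → ℕ → ℝ) (i : 𝕏) (s : ℝ) : ℝ :=
  ∑' m : ℕ, μ i m * s ^ m

/-- `fcomp μ env n s = f_{env 1} ∘ f_{env 2} ∘ ⋯ ∘ f_{env n} (s)`. -/
noncomputable def fcomp (μ : 𝕏 → ℕ → ℝ) (env : ℕ → 𝕏) : ℕ → ℝ → ℝ
  | 0, s => s
  | n + 1, s => fcomp μ env n (pgf μ (env (n + 1)) s)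

section Subfamily

variable {Ω ι β : Type*} [mβ : MeasurableSpace β] (f : ι → Ω → β)

abbrev subfamilySigma (S : Set ι) : MeasurableSpace Ω :=
  ⨆ i ∈ S, mβ.comap (f i)

variable {f}

lemma measurable_subfamilySigma {S : Set ι} {i : ι} (hi : i ∈ S) :
    Measurable[subfamilySigma f S] (f i) :=
  Measurable.of_comap_le (le_biSup (fun i => mβ.comap (f i)) hi)

lemma subfamilySigma_mono {S T : Set ι} (h : S ⊆ T) : subfamilySigma f S ≤ subfamilySigma f T :=
  biSup_mono h

lemma subfamilySigma_le_comap (S : Set ι) :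
    subfamilySigma f S ≤ MeasurableSpace.comap (fun ω i => f i ω) MeasurableSpace.pi :=
  iSup₂_le fun i _ => Measurable.comap_le (m₁ := MeasurableSpace.comap _ MeasurableSpace.pi)
    ((measurable_pi_apply i).comp (comap_measurable fun ω i => f i ω))

variable [MeasurableSpace Ω]

lemma subfamilySigma_le (hf : ∀ i, Measurable (f i)) (S : Set ι) :
    subfamilySigma f S ≤ ‹MeasurableSpace Ω› :=
  iSup₂_le fun i _ => (hf i).comap_le

lemma indep_subfamilySigma_of_disjoint {Pr : Measure Ω} (hf : ∀ i, Measurable (f i))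
    (hind : iIndepFun f Pr) {S T : Set ι} (hST : Disjoint S T) :
    Indep (subfamilySigma f S) (subfamilySigma f T) Pr :=
  indep_iSup_of_disjoint (fun i => (hf i).comap_le) hind.iIndep hST

end Subfamily

section Integrals

variable {Ω ι : Type*} [mΩ : MeasurableSpace Ω] {Pr : Measure Ω}
  [MeasurableSpace ι] [Countable ι] [MeasurableSingletonClass ι]

lemma measurable_comp_index {β : Type*} [MeasurableSpace β] {N : Ω → ι} (hN : Measurable N)
    {F : ι → Ω → β} (hF : ∀ i, Measurable (F i)) : Measurable fun ω => F (N ω) ω :=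
  (measurable_from_prod_countable_left (f := fun p : Ω × ι => F p.2 p.1) hF).comp
    (measurable_id.prodMk hN)

lemma integral_comp_index_eq_tsum {N : Ω → ι} (hN : Measurable N) {F : ι → Ω → ℝ}
    (hF : Integrable (fun ω => F (N ω) ω) Pr) :
    ∫ ω, F (N ω) ω ∂Pr = ∑' i, ∫ ω in N ⁻¹' {i}, F i ω ∂Pr := by
  have hfib : ∀ i, MeasurableSet (N ⁻¹' {i}) := fun i => hN (measurableSet_singleton i)
  calc ∫ ω, F (N ω) ω ∂Pr = ∫ ω in ⋃ i, N ⁻¹' {i}, F (N ω) ω ∂Pr := by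
        rw [← Set.preimage_iUnion, Set.iUnion_of_singleton, Set.preimage_univ, setIntegral_univ]
    _ = ∑' i, ∫ ω in N ⁻¹' {i}, F (N ω) ω ∂Pr :=
        integral_iUnion hfib (pairwise_disjoint_fiber N) hF.integrableOn
    _ = ∑' i, ∫ ω in N ⁻¹' {i}, F i ω ∂Pr :=
        tsum_congr fun i => setIntegral_congr_fun (hfib i) fun ω hω => by
          rw [show N ω = i from hω]

lemma integral_comp_eq_tsum {N : Ω → ι} (hN : Measurable N) {c : ι → ℝ}
    (hc : Integrable (fun ω => c (N ω)) Pr) :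
    ∫ ω, c (N ω) ∂Pr = ∑' i, Pr.real (N ⁻¹' {i}) * c i := by
  rw [integral_comp_index_eq_tsum hN (F := fun i _ => c i) hc]
  simp_rw [setIntegral_const, smul_eq_mul]

lemma condExp_comap_ae_eq_comp [IsFiniteMeasure Pr] {V : Ω → ι} (hV : Measurable V)
    {f : Ω → ℝ} (hf : Integrable f Pr) {G : ι → ℝ} (hG : Integrable (G ∘ V) Pr)
    (hatom : ∀ y, ∫ ω in V ⁻¹' {y}, f ω ∂Pr = Pr.real (V ⁻¹' {y}) * G y) :
    Pr[f | MeasurableSpace.comap V inferInstance] =ᵐ[Pr] G ∘ V := by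
  have hfib : ∀ y, MeasurableSet (V ⁻¹' {y}) := fun y => hV (measurableSet_singleton y)
  have hsplit : ∀ (B : Set ι) (φ : Ω → ℝ), Integrable φ Pr →
      ∫ ω in V ⁻¹' B, φ ω ∂Pr = ∑' y : B, ∫ ω in V ⁻¹' {(y : ι)}, φ ω ∂Pr := fun B φ hφ => by
    conv_lhs => rw [← Set.iUnion_of_singleton_coe B, Set.preimage_iUnion]
    exact integral_iUnion (fun y => hfib y)
      (fun y y' h => pairwise_disjoint_fiber V (Subtype.coe_injective.ne h)) hφ.integrableOn
  refine (ae_eq_condExp_of_forall_setIntegral_eq hV.comap_le hf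
    (fun _ _ _ => hG.integrableOn) ?_ ?_).symm
  · rintro _ ⟨B, -, rfl⟩ -
    rw [hsplit B _ hG, hsplit B f hf]
    refine tsum_congr fun y => ?_
    have hconst : Set.EqOn (G ∘ V) (fun _ => G y) (V ⁻¹' {(y : ι)}) :=
      fun ω hω => congrArg G hω
    rw [hatom, setIntegral_congr_fun (hfib y) hconst, setIntegral_const, smul_eq_mul]
  · exact ((measurable_of_countable G).comp (comap_measurable V)).aestronglyMeasurable

lemma integrable_pow_of_mem_Icc [IsFiniteMeasure Pr] {N : Ω → ℕ} (hN : Measurable N) {t : ℝ}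
    (ht : t ∈ Set.Icc (0 : ℝ) 1) :
    Integrable (fun ω => t ^ N ω) Pr :=
  .of_bound ((measurable_of_countable _).comp hN).aestronglyMeasurable 1
    (Eventually.of_forall fun ω => by
      rw [Real.norm_eq_abs, abs_of_nonneg (pow_nonneg ht.1 _)]
      exact pow_le_one₀ ht.1 ht.2)

lemma setIntegral_eq_mul_of_indep {m₁ m₂ : MeasurableSpace Ω} (hm₁ : m₁ ≤ mΩ) (hm₂ : m₂ ≤ mΩ)
    (hind : Indep m₁ m₂ Pr) {A : Set Ω} (hA : MeasurableSet[m₁] A) {g : Ω → ℝ}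
    (hg : Measurable[m₂] g) :
    ∫ ω in A, g ω ∂Pr = Pr.real A * ∫ ω, g ω ∂Pr :=
  (indep_of_indep_of_le_right hind hg.comap_le).setIntegral_eq_mul (f := id) hm₁
    (hg.mono hm₂ le_rfl).aemeasurable hA aestronglyMeasurable_id

lemma integral_pow_sum_range {η : ℕ → Ω → ℕ} (hη : iIndepFun η Pr)
    (hη_meas : ∀ j, Measurable (η j)) {t a : ℝ} (ha : ∀ j, ∫ ω, t ^ η j ω ∂Pr = a) :
    ∀ m, ∫ ω, t ^ (∑ j ∈ range m, η j ω) ∂Pr = a ^ m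
  | 0 => by
    have := hη.isProbabilityMeasure
    simp
  | m + 1 => by
    have hpow : Measurable fun l : ℕ => t ^ l := measurable_of_countable _
    have hind : IndepFun (fun ω => t ^ (∑ j ∈ range m, η j ω)) (fun ω => t ^ η m ω) Pr := by
      have := (hη.indepFun_sum_range_succ hη_meas m).comp hpow hpow
      simpa only [Function.comp_def, Finset.sum_apply] using this
    simp_rw [sum_range_succ, pow_add]
    rw [hind.integral_fun_mul_eq_mul_integral
      (hpow.comp (measurable_sum _ fun j _ => hη_meas j)).aestronglyMeasurable
      (hpow.comp (hη_meas m)).aestronglyMeasurable,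
      integral_pow_sum_range hη hη_meas ha m, ha m]
    ring

end Integrals


section Generation

variable {μ : 𝕏 → ℕ → ℝ} (hμ_nonneg : ∀ i m, 0 ≤ μ i m) (hμ_sum : ∀ i, ∑' m, μ i m = 1)
include hμ_nonneg hμ_sum

lemma pgf_mem_Icc (i : 𝕏) {t : ℝ} (ht : t ∈ Set.Icc (0 : ℝ) 1) :
    pgf μ i t ∈ Set.Icc (0 : ℝ) 1 := by
  have hμ : Summable (μ i) := by
    by_contra h
    simpa [tsum_eq_zero_of_not_summable h] using hμ_sum i
  have hnn : ∀ m, 0 ≤ μ i m * t ^ m := fun m => mul_nonneg (hμ_nonneg i m) (pow_nonneg ht.1 m)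
  have hle : ∀ m, μ i m * t ^ m ≤ μ i m := fun m =>
    mul_le_of_le_one_right (hμ_nonneg i m) (pow_le_one₀ ht.1 ht.2)
  refine ⟨tsum_nonneg hnn, ?_⟩
  calc pgf μ i t ≤ ∑' m, μ i m := (hμ.of_nonneg_of_le hnn hle).tsum_le_tsum hle hμ
    _ = 1 := hμ_sum i

lemma fcomp_mem_Icc (e : ℕ → 𝕏) :
    ∀ (n : ℕ) {t : ℝ}, t ∈ Set.Icc (0 : ℝ) 1 → fcomp μ e n t ∈ Set.Icc (0 : ℝ) 1
  | 0, _, ht => ht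
  | n + 1, _, ht => fcomp_mem_Icc e n (pgf_mem_Icc hμ_nonneg hμ_sum _ ht)

lemma norm_fcomp_le_one (e : ℕ → 𝕏) (n : ℕ) {t : ℝ} (ht : t ∈ Set.Icc (0 : ℝ) 1) :
    ‖fcomp μ e n t‖ ≤ 1 := by
  obtain ⟨h₀, h₁⟩ := fcomp_mem_Icc hμ_nonneg hμ_sum e n ht
  rwa [Real.norm_eq_abs, abs_of_nonneg h₀]

end Generation

lemma fcomp_congr {μ : 𝕏 → ℕ → ℝ} {e e' : ℕ → 𝕏} :
    ∀ {n : ℕ}, (∀ k < n, e (k + 1) = e' (k + 1)) → ∀ s, fcomp μ e n s = fcomp μ e' n s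
  | 0, _, _ => rfl
  | n + 1, h, s => by
    rw [fcomp, fcomp, h n n.lt_succ_self]
    exact fcomp_congr (fun k hk => h k (Nat.lt_succ_of_lt hk)) _

-- `ξ (x, k, j)` stands for the paper's `ξ_x^{k,j}`.
def branchingInEnv {Ω : Type*} (ξ : 𝕏 × ℕ × ℕ → Ω → ℕ) (e : ℕ → 𝕏) : ℕ → Ω → ℕ
  | 0, _ => 1
  | k + 1, ω => ∑ j ∈ range (branchingInEnv ξ e k ω), ξ (e (k + 1), k + 1, j) ω

section BranchingInEnv

variable {Ω : Type*} {ξ : 𝕏 × ℕ × ℕ → Ω → ℕ}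

lemma branchingInEnv_congr {e e' : ℕ → 𝕏} {n : ℕ} (h : ∀ k < n, e (k + 1) = e' (k + 1))
    (ω : Ω) : ∀ k ≤ n, branchingInEnv ξ e k ω = branchingInEnv ξ e' k ω
  | 0, _ => rfl
  | k + 1, hk => by
    rw [branchingInEnv, branchingInEnv, h k hk, branchingInEnv_congr h ω k (by omega)]

lemma measurable_branchingInEnv (e : ℕ → 𝕏) :
    ∀ k, Measurable[subfamilySigma ξ {q | q.2.1 ≤ k}] (branchingInEnv ξ e k)
  | 0 => measurable_const
  | k + 1 =>
    measurable_comp_index (mΩ := subfamilySigma ξ {q | q.2.1 ≤ k + 1})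
      ((measurable_branchingInEnv e k).mono
        (subfamilySigma_mono fun q (hq : q.2.1 ≤ k) => Nat.le_succ_of_le hq) le_rfl)
      fun _ => measurable_sum _ fun j _ =>
        measurable_subfamilySigma (i := (e (k + 1), k + 1, j)) (Nat.le_refl _)

end BranchingInEnv

section Quenched

variable {Ω : Type*} [MeasurableSpace Ω] {Pr : Measure Ω} [IsProbabilityMeasure Pr]
  {μ : 𝕏 → ℕ → ℝ} (hμ_nonneg : ∀ i m, 0 ≤ μ i m)

include hμ_nonneg in
lemma integral_pow_eq_pgf {N : Ω → ℕ} (hN : Measurable N) {x : 𝕏}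
    (hlaw : ∀ m, Pr (N ⁻¹' {m}) = ENNReal.ofReal (μ x m)) {t : ℝ}
    (ht : t ∈ Set.Icc (0 : ℝ) 1) : ∫ ω, t ^ N ω ∂Pr = pgf μ x t := by
  rw [integral_comp_eq_tsum hN (integrable_pow_of_mem_Icc hN ht), pgf]
  exact tsum_congr fun m => by
    rw [measureReal_def, hlaw, ENNReal.toReal_ofReal (hμ_nonneg x m)]

variable (hμ_sum : ∀ i, ∑' m, μ i m = 1) {ξ : 𝕏 × ℕ × ℕ → Ω → ℕ}
  (hξ_meas : ∀ q, Measurable (ξ q)) (hξ_indep : iIndepFun ξ Pr)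
  (hξ_law : ∀ q m, Pr {ω | ξ q ω = m} = ENNReal.ofReal (μ q.1 m))
include hμ_nonneg hμ_sum hξ_meas hξ_indep hξ_law

theorem integral_pow_branchingInEnv (e : ℕ → 𝕏) :
    ∀ n, ∀ t ∈ Set.Icc (0 : ℝ) 1, ∫ ω, t ^ branchingInEnv ξ e n ω ∂Pr = fcomp μ e n t
  | 0, t, _ => by simp [branchingInEnv, fcomp]
  | n + 1, t, ht => by
    set x := e (n + 1)
    set W := branchingInEnv ξ e n
    set S : ℕ → Ω → ℕ := fun m ω => ∑ j ∈ range m, ξ (x, n + 1, j) ω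
    have hu := pgf_mem_Icc hμ_nonneg hμ_sum x ht
    have hW_gen := measurable_branchingInEnv (ξ := ξ) e n
    have hW : Measurable W := hW_gen.mono (subfamilySigma_le hξ_meas _) le_rfl
    have hS : ∀ m, ∫ ω, t ^ S m ω ∂Pr = pgf μ x t ^ m :=
      integral_pow_sum_range
        (hξ_indep.precomp ((Prod.mk_right_injective x).comp (Prod.mk_right_injective (n + 1))))
        (fun j => hξ_meas _)
        fun j => integral_pow_eq_pgf hμ_nonneg (hξ_meas _) (hξ_law _) ht
    have hindep :
        Indep (subfamilySigma ξ {q | q.2.1 ≤ n}) (subfamilySigma ξ {q | n < q.2.1}) Pr :=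
      indep_subfamilySigma_of_disjoint hξ_meas hξ_indep
        (Set.disjoint_left.mpr fun q (h₁ : q.2.1 ≤ n) (h₂ : n < q.2.1) => by omega)
    have hatom : ∀ m,
        ∫ ω in W ⁻¹' {m}, t ^ S m ω ∂Pr = Pr.real (W ⁻¹' {m}) * pgf μ x t ^ m := by
      intro m
      rw [← hS m]
      refine setIntegral_eq_mul_of_indep (subfamilySigma_le hξ_meas _)
        (subfamilySigma_le hξ_meas _) hindep (hW_gen (measurableSet_singleton m)) ?_
      exact (measurable_of_countable _).comp (measurable_sum _ fun j _ =>
        measurable_subfamilySigma (i := (x, n + 1, j)) (Nat.lt_succ_self n))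
    calc ∫ ω, t ^ branchingInEnv ξ e (n + 1) ω ∂Pr
        = ∑' m, ∫ ω in W ⁻¹' {m}, t ^ S m ω ∂Pr :=
          integral_comp_index_eq_tsum hW (F := fun m ω => t ^ S m ω)
            (integrable_pow_of_mem_Icc ((measurable_branchingInEnv e (n + 1)).mono
              (subfamilySigma_le hξ_meas _) le_rfl) ht)
      _ = ∫ ω, pgf μ x t ^ W ω ∂Pr := by
          rw [integral_comp_eq_tsum hW (integrable_pow_of_mem_Icc hW hu)]
          exact tsum_congr hatom
      _ = fcomp μ e (n + 1) t := integral_pow_branchingInEnv e n _ hu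

theorem setIntegral_preimage_pow_branchingInEnv {γ : Type*} [MeasurableSpace γ] {Y : Ω → γ}
    (hY : Measurable Y) (hind : IndepFun (fun ω q => ξ q ω) Y Pr) {B : Set γ}
    (hB : MeasurableSet B) (e : ℕ → 𝕏) (n : ℕ) {t : ℝ} (ht : t ∈ Set.Icc (0 : ℝ) 1) :
    ∫ ω in Y ⁻¹' B, t ^ branchingInEnv ξ e n ω ∂Pr = Pr.real (Y ⁻¹' B) * fcomp μ e n t := by
  have hW : Measurable[MeasurableSpace.comap (fun ω q => ξ q ω) MeasurableSpace.pi]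
      fun ω => t ^ branchingInEnv ξ e n ω :=
    (measurable_of_countable _).comp
      ((measurable_branchingInEnv e n).mono (subfamilySigma_le_comap _) le_rfl)
  rw [setIntegral_eq_mul_of_indep hY.comap_le (measurable_pi_lambda _ hξ_meas).comap_le
    hind.symm ⟨B, hB, rfl⟩ hW,
    integral_pow_branchingInEnv hμ_nonneg hμ_sum hξ_meas hξ_indep hξ_law e n t ht]

end Quenched

section RandomEnv

variable {Ω : Type*} {ξ : 𝕏 × ℕ × ℕ → Ω → ℕ} {X : ℕ → Ω → 𝕏}

lemma eq_branchingInEnv {Z : ℕ → Ω → ℕ} (hZ0 : ∀ ω, Z 0 ω = 1)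
    (hZrec : ∀ n ω, Z (n + 1) ω = ∑ j ∈ range (Z n ω), ξ (X (n + 1) ω, n + 1, j) ω) :
    ∀ n, Z n = fun ω => branchingInEnv ξ (fun k => X k ω) n ω
  | 0 => funext hZ0
  | n + 1 => funext fun ω => by rw [hZrec, eq_branchingInEnv hZ0 hZrec n, branchingInEnv]

lemma measurable_branchingInEnv_of_measurable_env [MeasurableSpace Ω] [MeasurableSpace 𝕏]
    [Countable 𝕏] [MeasurableSingletonClass 𝕏] (hξ : ∀ q, Measurable (ξ q))
    (hX : ∀ k, Measurable (X k)) :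
    ∀ n, Measurable fun ω => branchingInEnv ξ (fun k => X k ω) n ω
  | 0 => measurable_const
  | n + 1 => measurable_comp_index (measurable_branchingInEnv_of_measurable_env hξ hX n)
      fun _ => measurable_sum _ fun j _ =>
        measurable_comp_index (hX (n + 1)) fun x => hξ (x, n + 1, j)

end RandomEnv

-- `y` read as the environment at times `1, …, n`; the padding `x₀` is never read up to time `n`.
def envOfPath (x₀ : 𝕏) {n : ℕ} (y : Fin n → 𝕏) : ℕ → 𝕏
  | 0 => x₀
  | k + 1 => if h : k < n then y ⟨k, h⟩ else x₀

lemma envOfPath_succ (x₀ : 𝕏) {n : ℕ} (y : Fin n → 𝕏) {k : ℕ} (hk : k < n) :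
    envOfPath x₀ y (k + 1) = y ⟨k, hk⟩ :=
  dif_pos hk

theorem conditioned_generating_function_general
    [Fintype 𝕏]
    [MeasurableSpace 𝕏] [MeasurableSingletonClass 𝕏]
    (μ : 𝕏 → ℕ → ℝ)
    (hμ_nonneg : ∀ i m, 0 ≤ μ i m) (hμ_sum : ∀ i, ∑' m : ℕ, μ i m = 1)
    {Ω : Type*} [MeasurableSpace Ω]
    (Pr : 𝕏 → Measure Ω) (hPr : ∀ i, IsProbabilityMeasure (Pr i))
    (X : ℕ → Ω → 𝕏) (hX : ∀ n, Measurable (X n))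
    (ξ : 𝕏 → ℕ → ℕ → Ω → ℕ) (hξ_meas : ∀ i n j, Measurable (ξ i n j))
    (hξ_law : ∀ i₀ i n j (m : ℕ), Pr i₀ {ω | ξ i n j ω = m} = ENNReal.ofReal (μ i m))
    (hξ_indep : ∀ i₀, iIndepFun (β := fun _ : 𝕏 × ℕ × ℕ => ℕ)
      (fun q ω => ξ q.1 q.2.1 q.2.2 ω) (Pr i₀))
    (hξX_indep : ∀ i₀, IndepFun
      (fun ω (q : 𝕏 × ℕ × ℕ) => ξ q.1 q.2.1 q.2.2 ω)
      (fun ω (n : ℕ) => X n ω) (Pr i₀))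
    (Z : ℕ → Ω → ℕ) (hZ0 : ∀ ω, Z 0 ω = 1)
    (hZrec : ∀ n ω, Z (n + 1) ω = ∑ j ∈ Finset.range (Z n ω), ξ (X (n + 1) ω) (n + 1) j ω) :
    ∀ (i : 𝕏) (s : ℝ), s ∈ Set.Icc (0 : ℝ) 1 → ∀ n : ℕ, 1 ≤ n →
      (Pr i)[(fun ω => s ^ Z n ω) |
          MeasurableSpace.comap (fun ω (k : Fin n) => X (k.1 + 1) ω) inferInstance]
        =ᵐ[Pr i] fun ω => fcomp μ (fun k => X k ω) n s := by
  intro i s hs n _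
  have := hPr i
  set ξ' : 𝕏 × ℕ × ℕ → Ω → ℕ := fun q => ξ q.1 q.2.1 q.2.2
  have hξ'_meas : ∀ q, Measurable (ξ' q) := fun q => hξ_meas _ _ _
  set V : Ω → (Fin n → 𝕏) := fun ω k => X (k.1 + 1) ω
  have hV : Measurable V := measurable_pi_lambda _ fun k => hX _
  have hXV : ∀ ω, ∀ k < n, X (k + 1) ω = envOfPath i (V ω) (k + 1) :=
    fun ω k hk => (envOfPath_succ i (V ω) hk).symm
  have hG :
      (fun ω => fcomp μ (fun k => X k ω) n s) = (fun y => fcomp μ (envOfPath i y) n s) ∘ V :=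
    funext fun ω => fcomp_congr (hXV ω) s
  rw [hG, eq_branchingInEnv (ξ := ξ') hZ0 hZrec n]
  beta_reduce
  refine condExp_comap_ae_eq_comp hV
    (integrable_pow_of_mem_Icc (measurable_branchingInEnv_of_measurable_env hξ'_meas hX n) hs)
    (.of_bound ((measurable_of_countable _).comp hV).aestronglyMeasurable 1
      (.of_forall fun ω => norm_fcomp_le_one hμ_nonneg hμ_sum _ n hs)) fun y => ?_
  calc ∫ ω in V ⁻¹' {y}, s ^ branchingInEnv ξ' (fun k => X k ω) n ω ∂Pr i
      = ∫ ω in V ⁻¹' {y}, s ^ branchingInEnv ξ' (envOfPath i y) n ω ∂Pr i :=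
        setIntegral_congr_fun (hV (measurableSet_singleton y)) fun ω (hω : V ω = y) => by
          rw [branchingInEnv_congr (hω ▸ hXV ω) ω n le_rfl]
    _ = (Pr i).real (V ⁻¹' {y}) * fcomp μ (envOfPath i y) n s :=
        setIntegral_preimage_pow_branchingInEnv hμ_nonneg hμ_sum hξ'_meas (hξ_indep i)
          (fun q => hξ_law i q.1 q.2.1 q.2.2) (measurable_pi_lambda _ hX) (hξX_indep i)
          ((measurable_pi_lambda (fun (x : ℕ → 𝕏) (k : Fin n) => x (k.1 + 1)) fun k =>
            measurable_pi_apply _) (measurableSet_singleton y)) _ n hs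

theorem conditioned_generating_function
    [Fintype 𝕏] [Nonempty 𝕏]
    [MeasurableSpace 𝕏] [MeasurableSingletonClass 𝕏]
    (P : 𝕏 → 𝕏 → ℝ)
    (hP_nonneg : ∀ i j, 0 ≤ P i j) (hP_row : ∀ i, ∑ j, P i j = 1)
    (μ : 𝕏 → ℕ → ℝ)
    (hμ_nonneg : ∀ i m, 0 ≤ μ i m) (hμ_sum : ∀ i, ∑' m : ℕ, μ i m = 1)
    {Ω : Type*} [MeasurableSpace Ω]
    (Pr : 𝕏 → Measure Ω) (hPr : ∀ i, IsProbabilityMeasure (Pr i))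
    (X : ℕ → Ω → 𝕏) (hX : ∀ n, Measurable (X n))
    (hchain : ∀ i (n : ℕ) (x : ℕ → 𝕏),
      Pr i {ω | X 0 ω = i ∧ ∀ k < n, X (k + 1) ω = x k} =
        ENNReal.ofReal (∏ k ∈ Finset.range n, P (if k = 0 then i else x (k - 1)) (x k)))
    (ξ : 𝕏 → ℕ → ℕ → Ω → ℕ) (hξ_meas : ∀ i n j, Measurable (ξ i n j))
    (hξ_law : ∀ i₀ i n j (m : ℕ), Pr i₀ {ω | ξ i n j ω = m} = ENNReal.ofReal (μ i m))
    (hξ_indep : ∀ i₀, iIndepFun (β := fun _ : 𝕏 × ℕ × ℕ => ℕ)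
      (fun q ω => ξ q.1 q.2.1 q.2.2 ω) (Pr i₀))
    (hξX_indep : ∀ i₀, IndepFun
      (fun ω (q : 𝕏 × ℕ × ℕ) => ξ q.1 q.2.1 q.2.2 ω)
      (fun ω (n : ℕ) => X n ω) (Pr i₀))
    (Z : ℕ → Ω → ℕ) (hZ0 : ∀ ω, Z 0 ω = 1)
    (hZrec : ∀ n ω, Z (n + 1) ω = ∑ j ∈ Finset.range (Z n ω), ξ (X (n + 1) ω) (n + 1) j ω) :
    ∀ (i : 𝕏) (s : ℝ), s ∈ Set.Icc (0 : ℝ) 1 → ∀ n : ℕ, 1 ≤ n →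
      (Pr i)[(fun ω => s ^ Z n ω) |
          MeasurableSpace.comap (fun ω (k : Fin n) => X (k.1 + 1) ω) inferInstance]
        =ᵐ[Pr i] fun ω => fcomp μ (fun k => X k ω) n s :=
  conditioned_generating_function_general μ hμ_nonneg hμ_sum Pr hPr X hX ξ hξ_meas hξ_law hξ_indep
    hξX_indep Z hZ0 hZrec

end Stmt4
end

section
/- Agresti-type identity (deterministic form of Lemma 3.2). For every n ≥ 1 and every s ∈ [0,1): (1 − f_1 ∘ ⋯ ∘ f_n(s))^{−1} = e^{−S_n}/(1−s) + Σ_{k=0}^{n−1} e^{−S_k} · η_{k+1,n}(s). In particular, taking s = 0, (1 − f_1 ∘ ⋯ ∘ f_n(0))^{−1} = e^{−S_n} + Σ_{k=0}^{n−1} e^{−S_k} η_{k+1,n}(0). -/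
/- STATEMENT 6: Agresti-type identity (deterministic form of Lemma 3.2).
For k = 1,…,n, p_k is a probability distribution on ℕ with finite positive mean
m_k, f_k its generating function, S_0 = 0, S_k = ln(m_1⋯m_k),
g_k(t) = 1/(1 − f_k(t)) − 1/(m_k(1 − t)),
η_{k,n}(s) = g_k(f_{k+1}∘⋯∘f_n(s)) (the inner composition being the identity when k = n).
Then for every s ∈ [0,1):
(1 − f_1∘⋯∘f_n(s))⁻¹ = e^{−S_n}/(1−s) + Σ_{k=0}^{n−1} e^{−S_k} η_{k+1,n}(s),
and in particular, for s = 0,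
(1 − f_1∘⋯∘f_n(0))⁻¹ = e^{−S_n} + Σ_{k=0}^{n−1} e^{−S_k} η_{k+1,n}(0). -/

open Finset

namespace Stmt6

/-- generating function of the distribution `p k`. -/
noncomputable def gen (p : ℕ → ℕ → ℝ) (k : ℕ) (s : ℝ) : ℝ :=
  ∑' m : ℕ, p k m * s ^ m

/-- mean m_k of the distribution `p k`. -/
noncomputable def mean (p : ℕ → ℕ → ℝ) (k : ℕ) : ℝ :=
  ∑' m : ℕ, (m : ℝ) * p k m

/-- S_k = ln (m_1 ⋯ m_k). -/
noncomputable def walk (p : ℕ → ℕ → ℝ) (k : ℕ) : ℝ :=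
  ∑ j ∈ Finset.range k, Real.log (mean p (j + 1))

/-- g_k(t) = 1/(1 − f_k(t)) − 1/(m_k (1 − t)). -/
noncomputable def gfun (p : ℕ → ℕ → ℝ) (k : ℕ) (t : ℝ) : ℝ :=
  1 / (1 - gen p k t) - 1 / (mean p k * (1 - t))

/-- composition f_a ∘ f_{a+1} ∘ ⋯ ∘ f_b applied to s (the identity when a > b). -/
noncomputable def compo (p : ℕ → ℕ → ℝ) (a b : ℕ) (s : ℝ) : ℝ :=
  (List.range' a (b + 1 - a)).foldr (fun k t => gen p k t) s

/-- η_{k,n}(s) = g_k(f_{k+1} ∘ ⋯ ∘ f_n (s)). -/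
noncomputable def eta (p : ℕ → ℕ → ℝ) (k n : ℕ) (s : ℝ) : ℝ :=
  gfun p k (compo p (k + 1) n s)

lemma compo_stop (p : ℕ → ℕ → ℝ) (b : ℕ) (s : ℝ) : compo p (b + 1) b s = s := by
  simp [compo, Nat.sub_self]

lemma compo_step (p : ℕ → ℕ → ℝ) {a b : ℕ} (h : a ≤ b) (s : ℝ) :
    compo p a b s = gen p a (compo p (a + 1) b s) := by
  unfold compo
  have h1 : b + 1 - a = (b + 1 - (a + 1)) + 1 := by omega
  rw [h1, List.range'_succ]
  simp

theorem agresti_identity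
    (n : ℕ) (hn : 1 ≤ n) (p : ℕ → ℕ → ℝ)
    (hnonneg : ∀ k ∈ Finset.Icc 1 n, ∀ m, 0 ≤ p k m)
    (hsum : ∀ k ∈ Finset.Icc 1 n, ∑' m : ℕ, p k m = 1)
    (hmean_summable : ∀ k ∈ Finset.Icc 1 n, Summable (fun m : ℕ => (m : ℝ) * p k m))
    (hmean_pos : ∀ k ∈ Finset.Icc 1 n, 0 < mean p k) :
    (∀ s : ℝ, s ∈ Set.Ico (0 : ℝ) 1 →
      (1 - compo p 1 n s)⁻¹ =
        Real.exp (-(walk p n)) / (1 - s) +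
          ∑ k ∈ Finset.range n, Real.exp (-(walk p k)) * eta p (k + 1) n s) ∧
    (1 - compo p 1 n 0)⁻¹ =
      Real.exp (-(walk p n)) +
        ∑ k ∈ Finset.range n, Real.exp (-(walk p k)) * eta p (k + 1) n 0 := by
  have key : ∀ s : ℝ, (1 - compo p 1 n s)⁻¹ =
      Real.exp (-(walk p n)) / (1 - s) +
        ∑ k ∈ Finset.range n, Real.exp (-(walk p k)) * eta p (k + 1) n s := by
    intro s
    set A : ℕ → ℝ := fun k => Real.exp (-(walk p k)) / (1 - compo p (k + 1) n s) with hA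
    have step : ∀ k ∈ Finset.range n,
        Real.exp (-(walk p k)) * eta p (k + 1) n s = A k - A (k + 1) := by
      intro k hk
      rw [Finset.mem_range] at hk
      have hm : 0 < mean p (k + 1) := hmean_pos (k + 1) (by simp; omega)
      have hc : compo p (k + 1) n s = gen p (k + 1) (compo p (k + 2) n s) :=
        compo_step p (by omega) s
      have hexp : Real.exp (-(walk p (k + 1)))
          = Real.exp (-(walk p k)) / mean p (k + 1) := by
        have : walk p (k + 1) = walk p k + Real.log (mean p (k + 1)) := by
          simp [walk, Finset.sum_range_succ]
        rw [this, neg_add, Real.exp_add, Real.exp_neg (Real.log _), Real.exp_log hm, div_eq_mul_inv]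
      simp only [hA, hc, hexp, eta, gfun]
      have h2 : k + 1 + 1 = k + 2 := rfl
      rw [h2, mul_sub, mul_one_div, mul_one_div, div_div]
    rw [Finset.sum_congr rfl step, Finset.sum_range_sub' A n]
    have hA0 : A 0 = (1 - compo p 1 n s)⁻¹ := by
      simp [hA, walk, one_div]
    have hAn : A n = Real.exp (-(walk p n)) / (1 - s) := by
      simp [hA, compo_stop]
    rw [hA0, hAn]
    ring
  refine ⟨fun s _ => key s, ?_⟩
  have := key 0
  simpa using this

end Stmt6
end

section
/- Uniform bound and convergence for the remainder terms (Lemma 3.3). Let η := max_{i ∈ 𝕏} f_i''(1)/f_i'(1)², which is finite. Then: (i) for every n ≥ 2, every i_1, …, i_n ∈ 𝕏 and every s ∈ [0,1), 0 ≤ g_{i_1}(f_{i_2} ∘ ⋯ ∘ f_{i_n}(s)) ≤ η; (ii) for every sequence (i_n)_{n≥1} in 𝕏, every s ∈ [0,1) and every k ≥ 1, the limit lim_{n→∞} g_{i_k}(f_{i_{k+1}} ∘ ⋯ ∘ f_{i_n}(s)) exists and belongs to [0, η]. -/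
/- STATEMENT 7: Uniform bound and convergence for the remainder terms (Lemma 3.3).
𝕏 is a finite nonempty set; for each i ∈ 𝕏, ξ_i is an ℕ-valued random variable
(represented by its pmf `μ i`) with 0 < 𝔼(ξ_i) and 𝔼(ξ_i²) < ∞; f_i is its
probability generating function, f_i'(1) = 𝔼ξ_i, f_i''(1) = 𝔼(ξ_i(ξ_i−1)),
g_i(t) = 1/(1 − f_i(t)) − 1/(f_i'(1)(1 − t)).
Let η := max_i f_i''(1)/f_i'(1)². Then
(i) for every n ≥ 2, i_1,…,i_n ∈ 𝕏, s ∈ [0,1): 0 ≤ g_{i_1}(f_{i_2}∘⋯∘f_{i_n}(s)) ≤ η;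
(ii) for every sequence (i_n), s ∈ [0,1), k ≥ 1, the limit
  lim_n g_{i_k}(f_{i_{k+1}}∘⋯∘f_{i_n}(s)) exists and lies in [0,η]. -/

open Filter Topology

namespace Stmt7

/-- probability generating function of the pmf `μ i`. -/
noncomputable def pgf {𝕏 : Type*} (μ : 𝕏 → ℕ → ℝ) (i : 𝕏) (s : ℝ) : ℝ :=
  ∑' m : ℕ, μ i m * s ^ m

/-- mean of the pmf `μ i`, i.e. f_i'(1). -/
noncomputable def offMean {𝕏 : Type*} (μ : 𝕏 → ℕ → ℝ) (i : 𝕏) : ℝ :=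
  ∑' m : ℕ, (m : ℝ) * μ i m

/-- second factorial moment of the pmf `μ i`, i.e. f_i''(1) = 𝔼(ξ_i(ξ_i − 1)). -/
noncomputable def facMom2 {𝕏 : Type*} (μ : 𝕏 → ℕ → ℝ) (i : 𝕏) : ℝ :=
  ∑' m : ℕ, (m : ℝ) * ((m : ℝ) - 1) * μ i m

/-- g_i(t) = 1/(1 − f_i(t)) − 1/(f_i'(1)(1 − t)). -/
noncomputable def gfun {𝕏 : Type*} (μ : 𝕏 → ℕ → ℝ) (i : 𝕏) (t : ℝ) : ℝ :=
  1 / (1 - pgf μ i t) - 1 / (offMean μ i * (1 - t))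

/-- composition f_{x a} ∘ f_{x (a+1)} ∘ ⋯ ∘ f_{x b} applied to s
(the identity when a > b). -/
noncomputable def compo {𝕏 : Type*} (μ : 𝕏 → ℕ → ℝ) (x : ℕ → 𝕏) (a b : ℕ) (s : ℝ) : ℝ :=
  (List.range' a (b + 1 - a)).foldr (fun k t => pgf μ (x k) t) s

/-- η = max_{i ∈ 𝕏} f_i''(1)/f_i'(1)². -/
noncomputable def eta {𝕏 : Type*} [Fintype 𝕏] [Nonempty 𝕏] (μ : 𝕏 → ℕ → ℝ) : ℝ :=
  ⨆ i : 𝕏, facMom2 μ i / (offMean μ i) ^ 2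

/-! Write `G_m(t) = 1 + t + ⋯ + t^(m-1)` and `A_m(t) = G_0(t) + ⋯ + G_(m-1)(t)` (`geomSum`,
`geomSumSum`). Then `1 - f(t) = (1 - t) ∑ p_m G_m(t)` and
`f'(1) - ∑ p_m G_m(t) = (1 - t) ∑ p_m A_m(t)`, so `g(t) = ∑ p_m A_m(t) / (f'(1) ∑ p_m G_m(t))`
(`gfunExt`), a quotient that is continuous on all of `[0, 1]`.
The bound `g ≤ f''(1) / f'(1)²` is then a Chebyshev-type inequality between the weights `p_m G_m`
and `p_m m`, proved by symmetrising the double sum.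

Part (ii) thus reduces to the convergence of the backward compositions `F_n(s)`. The values
`F_n(0)` increase. A step with `f(0) = 0` has `f(t) ≤ t`, so it does not increase
`F_n(s) - F_n(0)`; if all but finitely many steps are of this kind, that difference converges.
Otherwise there are infinitely many steps with `f(0) ≥ c > 0` (the laws form a finite set). Since
`F_n` has nonnegative Taylor coefficients, `c^M (F(r) - F(0)) ≤ F(c) - F(0) + (c r)^M`, so after
such a step `F_n(s) - F_n(0) ≤ (F_n(0) - F_(n-1)(0)) / c^M + r^M`, with `r = max_i f_i(s) < 1`;
this forces `F_n(s) - F_n(0) → 0`. The coefficients of a composition are computed in `ℝ≥0∞`,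
where all sums exist and may be rearranged freely. -/

open Finset
open scoped ENNReal

structure IsProbMass (p : ℕ → ℝ) : Prop where
  nonneg : ∀ m, 0 ≤ p m
  hasSum : HasSum p 1

lemma IsProbMass.of_tsum_eq_one {p : ℕ → ℝ} (h0 : ∀ m, 0 ≤ p m) (h1 : ∑' m, p m = 1) :
    IsProbMass p := by
  refine ⟨h0, ?_⟩
  by_cases hs : Summable p
  · exact h1 ▸ hs.hasSum
  · simp [tsum_eq_zero_of_not_summable hs] at h1

lemma IsProbMass.summable_mul_of_summable_sq {p : ℕ → ℝ} (hp : IsProbMass p)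
    (h2 : Summable fun m : ℕ => (m : ℝ) ^ 2 * p m) : Summable fun m : ℕ => (m : ℝ) * p m := by
  refine h2.of_nonneg_of_le (fun m => mul_nonneg m.cast_nonneg (hp.nonneg m)) fun m => ?_
  refine mul_le_mul_of_nonneg_right ?_ (hp.nonneg m)
  rcases m.eq_zero_or_pos with rfl | hm
  · simp
  · exact le_self_pow₀ (by exact_mod_cast hm) two_ne_zero

section Pgf

variable {𝕏 : Type*} {μ : 𝕏 → ℕ → ℝ} {i : 𝕏} {t : ℝ}

lemma IsProbMass.summable_mul_pow (hp : IsProbMass (μ i)) (ht : t ∈ Set.Icc (0 : ℝ) 1) :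
    Summable fun m => μ i m * t ^ m :=
  hp.hasSum.summable.of_nonneg_of_le (fun m => mul_nonneg (hp.nonneg m) (pow_nonneg ht.1 m))
    fun m => mul_le_of_le_one_right (hp.nonneg m) (pow_le_one₀ ht.1 ht.2)

lemma pgf_zero : pgf μ i 0 = μ i 0 := by
  rw [pgf, tsum_eq_single 0 fun m hm => by simp [hm]]
  simp

lemma pgf_one (hp : IsProbMass (μ i)) : pgf μ i 1 = 1 := by
  simpa [pgf] using hp.hasSum.tsum_eq

lemma pgf_nonneg (hp : IsProbMass (μ i)) (ht : 0 ≤ t) : 0 ≤ pgf μ i t :=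
  tsum_nonneg fun m => mul_nonneg (hp.nonneg m) (pow_nonneg ht m)

lemma pgf_monotoneOn (hp : IsProbMass (μ i)) : MonotoneOn (pgf μ i) (Set.Icc 0 1) :=
  fun _ ht _ hu htu => Summable.tsum_le_tsum
    (fun m => mul_le_mul_of_nonneg_left (pow_le_pow_left₀ ht.1 htu m) (hp.nonneg m))
    (hp.summable_mul_pow ht) (hp.summable_mul_pow hu)

lemma pgf_mem_Icc (hp : IsProbMass (μ i)) (ht : t ∈ Set.Icc (0 : ℝ) 1) :
    pgf μ i t ∈ Set.Icc (0 : ℝ) 1 :=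
  ⟨pgf_nonneg hp ht.1, pgf_one hp ▸ pgf_monotoneOn hp ht ⟨zero_le_one, le_rfl⟩ ht.2⟩

lemma pgf_le_self (hp : IsProbMass (μ i)) (h0 : μ i 0 = 0) (ht : t ∈ Set.Icc (0 : ℝ) 1) :
    pgf μ i t ≤ t := by
  have hterm (m : ℕ) : μ i m * t ^ m ≤ μ i m * t := by
    rcases m.eq_zero_or_pos with rfl | hm
    · simp [h0]
    · exact mul_le_mul_of_nonneg_left (pow_le_of_le_one ht.1 ht.2 hm.ne') (hp.nonneg m)
  calc pgf μ i t ≤ ∑' m, μ i m * t :=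
        Summable.tsum_le_tsum hterm (hp.summable_mul_pow ht) (hp.hasSum.summable.mul_right t)
    _ = t := by rw [tsum_mul_right, hp.hasSum.tsum_eq, one_mul]

end Pgf

noncomputable def geomSum (t : ℝ) (m : ℕ) : ℝ := ∑ j ∈ range m, t ^ j

noncomputable def geomSumSum (t : ℝ) (m : ℕ) : ℝ := ∑ j ∈ range m, geomSum t j

section GeomSum

variable {t : ℝ}

lemma continuous_geomSum (m : ℕ) : Continuous fun t => geomSum t m := by
  unfold geomSum; fun_prop

lemma continuous_geomSumSum (m : ℕ) : Continuous fun t => geomSumSum t m :=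
  continuous_finsetSum _ fun j _ => continuous_geomSum j

lemma one_sub_pow_eq_mul_geomSum (m : ℕ) : 1 - t ^ m = (1 - t) * geomSum t m := by
  rw [geomSum, ← geom_sum_mul_neg, mul_comm]

lemma sub_geomSum_eq_mul_geomSumSum (m : ℕ) : m - geomSum t m = (1 - t) * geomSumSum t m := by
  calc (m : ℝ) - geomSum t m = ∑ j ∈ range m, (1 - t ^ j) := by simp [geomSum]
    _ = (1 - t) * geomSumSum t m := by
      rw [geomSumSum, mul_sum]; exact sum_congr rfl fun j _ => one_sub_pow_eq_mul_geomSum j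

lemma geomSum_nonneg (ht : 0 ≤ t) (m : ℕ) : 0 ≤ geomSum t m :=
  sum_nonneg fun j _ => pow_nonneg ht j

lemma geomSum_monotone (ht : 0 ≤ t) : Monotone (geomSum t) := fun _ _ h =>
  sum_le_sum_of_subset_of_nonneg (range_subset_range.2 h) fun j _ _ => pow_nonneg ht j

lemma one_le_geomSum (ht : 0 ≤ t) {m : ℕ} (hm : 1 ≤ m) : 1 ≤ geomSum t m := by
  simpa [geomSum] using geomSum_monotone ht hm

lemma geomSum_le (ht : t ∈ Set.Icc (0 : ℝ) 1) (m : ℕ) : geomSum t m ≤ m := by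
  simpa [geomSum] using sum_le_sum fun j (_ : j ∈ range m) => pow_le_one₀ ht.1 ht.2

lemma geomSumSum_nonneg (ht : 0 ≤ t) (m : ℕ) : 0 ≤ geomSumSum t m :=
  sum_nonneg fun j _ => geomSum_nonneg ht j

lemma geomSumSum_le (ht : 0 ≤ t) (m : ℕ) : geomSumSum t m ≤ (m - 1) * geomSum t m := by
  induction m with
  | zero => simp [geomSumSum, geomSum]
  | succ n ih =>
    have hmono := geomSum_monotone ht n.le_succ
    have hpos := geomSum_nonneg ht n
    rw [geomSumSum, sum_range_succ, ← geomSumSum]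
    push_cast
    nlinarith [n.cast_nonneg (α := ℝ)]

lemma geomSumSum_le_sq (ht : t ∈ Set.Icc (0 : ℝ) 1) (m : ℕ) : geomSumSum t m ≤ (m : ℝ) ^ 2 := by
  nlinarith [geomSumSum_le ht.1 m, geomSum_le ht m, geomSum_nonneg ht.1 m, m.cast_nonneg (α := ℝ)]

lemma natCast_mul_geomSum_le (ht : t ∈ Set.Icc (0 : ℝ) 1) {n m : ℕ} (hnm : n ≤ m) :
    n * geomSum t m ≤ m * geomSum t n := by
  have htail : geomSum t m - geomSum t n ≤ (m - n) * t ^ n := by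
    rw [geomSum, geomSum, ← sum_Ico_eq_sub _ hnm]
    simpa [Nat.cast_sub hnm] using
      sum_le_sum fun j (hj : j ∈ Ico n m) => pow_le_pow_of_le_one ht.1 ht.2 (mem_Ico.1 hj).1
  have hhead : n * t ^ n ≤ geomSum t n := by
    simpa [geomSum, mul_comm] using
      sum_le_sum fun j (hj : j ∈ range n) => pow_le_pow_of_le_one ht.1 ht.2 (mem_range.1 hj).le
  have hnm' : (n : ℝ) ≤ m := by exact_mod_cast hnm
  nlinarith [n.cast_nonneg (α := ℝ), pow_nonneg ht.1 n]

/-- By `geomSumSum_le`, this reduces to `(n G_m - m G_n) (m - n) ≤ 0`. -/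
lemma geomSumSum_mul_add_le (ht : t ∈ Set.Icc (0 : ℝ) 1) (m n : ℕ) :
    geomSumSum t m * n + geomSumSum t n * m ≤
      m * (m - 1) * geomSum t n + n * (n - 1) * geomSum t m := by
  wlog hnm : n ≤ m generalizing m n
  · linarith [this n m (le_of_not_ge hnm)]
  have hcross := natCast_mul_geomSum_le ht hnm
  have hnm' : (n : ℝ) ≤ m := by exact_mod_cast hnm
  nlinarith [geomSumSum_le ht.1 m, geomSumSum_le ht.1 n, n.cast_nonneg (α := ℝ),
    m.cast_nonneg (α := ℝ), mul_nonneg (sub_nonneg.2 hnm') (sub_nonneg.2 hcross)]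

end GeomSum

lemma tsum_le_tsum_of_add_swap_le {α : Type*} {f g : α × α → ℝ} (hf : Summable f)
    (hg : Summable g) (h : ∀ a b, f (a, b) + f (b, a) ≤ g (a, b) + g (b, a)) :
    ∑' z, f z ≤ ∑' z, g z := by
  have hswap : ∀ {F : α × α → ℝ}, Summable F →
      ∑' z : α × α, (F z + F z.swap) = 2 * ∑' z, F z := fun {F} hF => by
    have h' : ∑' z : α × α, F z.swap = ∑' z, F z := (Equiv.prodComm α α).tsum_eq F
    have hs : Summable fun z : α × α => F z.swap := (Equiv.prodComm α α).summable_iff.2 hF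
    rw [hF.tsum_add hs, h']; ring
  have key : ∑' z : α × α, (f z + f z.swap) ≤ ∑' z : α × α, (g z + g z.swap) :=
    Summable.tsum_le_tsum (fun z => h z.1 z.2)
      (hf.add ((Equiv.prodComm α α).summable_iff.2 hf))
      (hg.add ((Equiv.prodComm α α).summable_iff.2 hg))
  rw [hswap hf, hswap hg] at key
  linarith

lemma natCast_mul_natCast_sub_one_nonneg (m : ℕ) : 0 ≤ (m : ℝ) * (m - 1) := by
  rcases m.eq_zero_or_pos with rfl | hm
  · simp
  · exact mul_nonneg m.cast_nonneg (sub_nonneg.2 (by exact_mod_cast hm))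

noncomputable def pgfSlope {𝕏 : Type*} (μ : 𝕏 → ℕ → ℝ) (i : 𝕏) (t : ℝ) : ℝ :=
  ∑' m, μ i m * geomSum t m

noncomputable def pgfSlope₂ {𝕏 : Type*} (μ : 𝕏 → ℕ → ℝ) (i : 𝕏) (t : ℝ) : ℝ :=
  ∑' m, μ i m * geomSumSum t m

noncomputable def gfunExt {𝕏 : Type*} (μ : 𝕏 → ℕ → ℝ) (i : 𝕏) (t : ℝ) : ℝ :=
  pgfSlope₂ μ i t / (pgfSlope μ i t * offMean μ i)

section Slope

variable {𝕏 : Type*} {μ : 𝕏 → ℕ → ℝ} {i : 𝕏} {t : ℝ}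

lemma norm_mul_geomSum_le (hp : IsProbMass (μ i)) (ht : t ∈ Set.Icc (0 : ℝ) 1) (m : ℕ) :
    ‖μ i m * geomSum t m‖ ≤ m * μ i m := by
  rw [Real.norm_eq_abs, abs_of_nonneg (mul_nonneg (hp.nonneg m) (geomSum_nonneg ht.1 m)),
    mul_comm (m : ℝ)]
  exact mul_le_mul_of_nonneg_left (geomSum_le ht m) (hp.nonneg m)

lemma norm_mul_geomSumSum_le (hp : IsProbMass (μ i)) (ht : t ∈ Set.Icc (0 : ℝ) 1) (m : ℕ) :
    ‖μ i m * geomSumSum t m‖ ≤ m ^ 2 * μ i m := by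
  rw [Real.norm_eq_abs, abs_of_nonneg (mul_nonneg (hp.nonneg m) (geomSumSum_nonneg ht.1 m)),
    mul_comm _ (μ i m)]
  exact mul_le_mul_of_nonneg_left (geomSumSum_le_sq ht m) (hp.nonneg m)

lemma summable_mul_geomSum (hp : IsProbMass (μ i))
    (h1 : Summable fun m : ℕ => (m : ℝ) * μ i m) (ht : t ∈ Set.Icc (0 : ℝ) 1) :
    Summable fun m => μ i m * geomSum t m :=
  h1.of_norm_bounded (norm_mul_geomSum_le hp ht)

lemma summable_mul_geomSumSum (hp : IsProbMass (μ i))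
    (h2 : Summable fun m : ℕ => (m : ℝ) ^ 2 * μ i m) (ht : t ∈ Set.Icc (0 : ℝ) 1) :
    Summable fun m => μ i m * geomSumSum t m :=
  h2.of_norm_bounded (norm_mul_geomSumSum_le hp ht)

lemma one_sub_pgf_eq (hp : IsProbMass (μ i)) (ht : t ∈ Set.Icc (0 : ℝ) 1) :
    1 - pgf μ i t = (1 - t) * pgfSlope μ i t := by
  calc 1 - pgf μ i t = ∑' m, (μ i m - μ i m * t ^ m) := by
        rw [hp.hasSum.summable.tsum_sub (hp.summable_mul_pow ht), hp.hasSum.tsum_eq, pgf]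
    _ = (1 - t) * pgfSlope μ i t := by
      rw [pgfSlope, ← tsum_mul_left]
      exact tsum_congr fun m => by
        linear_combination μ i m * one_sub_pow_eq_mul_geomSum (t := t) m

lemma offMean_sub_pgfSlope_eq (hp : IsProbMass (μ i))
    (h1 : Summable fun m : ℕ => (m : ℝ) * μ i m) (ht : t ∈ Set.Icc (0 : ℝ) 1) :
    offMean μ i - pgfSlope μ i t = (1 - t) * pgfSlope₂ μ i t := by
  rw [offMean, pgfSlope, ← h1.tsum_sub (summable_mul_geomSum hp h1 ht), pgfSlope₂,
    ← tsum_mul_left]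
  exact tsum_congr fun m => by linear_combination μ i m * sub_geomSum_eq_mul_geomSumSum (t := t) m

lemma pgfSlope_pos (hp : IsProbMass (μ i)) (h1 : Summable fun m : ℕ => (m : ℝ) * μ i m)
    (hpos : 0 < offMean μ i) (ht : t ∈ Set.Icc (0 : ℝ) 1) : 0 < pgfSlope μ i t := by
  obtain ⟨m, hm⟩ : ∃ m : ℕ, 0 < (m : ℝ) * μ i m := by
    by_contra! h
    exact hpos.not_ge (tsum_nonpos h)
  have hm1 : 1 ≤ m := Nat.one_le_iff_ne_zero.2 fun h => by simp [h] at hm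
  have hμm : 0 < μ i m := pos_of_mul_pos_right hm m.cast_nonneg
  calc 0 < μ i m * geomSum t m := mul_pos hμm (one_pos.trans_le (one_le_geomSum ht.1 hm1))
    _ ≤ pgfSlope μ i t := (summable_mul_geomSum hp h1 ht).le_tsum m
        fun n _ => mul_nonneg (hp.nonneg n) (geomSum_nonneg ht.1 n)

lemma pgfSlope₂_nonneg (hp : IsProbMass (μ i)) (ht : 0 ≤ t) : 0 ≤ pgfSlope₂ μ i t :=
  tsum_nonneg fun m => mul_nonneg (hp.nonneg m) (geomSumSum_nonneg ht m)

lemma pgfSlope₂_mul_offMean_le (hp : IsProbMass (μ i))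
    (h1 : Summable fun m : ℕ => (m : ℝ) * μ i m) (h2 : Summable fun m : ℕ => (m : ℝ) ^ 2 * μ i m)
    (ht : t ∈ Set.Icc (0 : ℝ) 1) :
    pgfSlope₂ μ i t * offMean μ i ≤ facMom2 μ i * pgfSlope μ i t := by
  have hA := summable_mul_geomSumSum hp h2 ht
  have hG := summable_mul_geomSum hp h1 ht
  have hF : Summable fun m : ℕ => (m : ℝ) * (m - 1) * μ i m := by
    simpa [mul_sub, sub_mul, ← sq] using h2.sub h1
  have hA0 : ∀ m, 0 ≤ μ i m * geomSumSum t m :=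
    fun m => mul_nonneg (hp.nonneg m) (geomSumSum_nonneg ht.1 m)
  have hG0 : ∀ m, 0 ≤ μ i m * geomSum t m :=
    fun m => mul_nonneg (hp.nonneg m) (geomSum_nonneg ht.1 m)
  have h10 : ∀ m : ℕ, 0 ≤ (m : ℝ) * μ i m := fun m => mul_nonneg m.cast_nonneg (hp.nonneg m)
  have hF0 : ∀ m : ℕ, 0 ≤ (m : ℝ) * (m - 1) * μ i m :=
    fun m => mul_nonneg (natCast_mul_natCast_sub_one_nonneg m) (hp.nonneg m)
  have hAp : Summable fun z : ℕ × ℕ => μ i z.1 * geomSumSum t z.1 * (z.2 * μ i z.2) :=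
    hA.mul_of_nonneg h1 hA0 h10
  have hFp : Summable fun z : ℕ × ℕ => z.1 * (z.1 - 1) * μ i z.1 * (μ i z.2 * geomSum t z.2) :=
    hF.mul_of_nonneg hG hF0 hG0
  rw [pgfSlope₂, offMean, facMom2, pgfSlope, hA.tsum_mul_tsum h1 hAp, hF.tsum_mul_tsum hG hFp]
  refine tsum_le_tsum_of_add_swap_le hAp hFp fun m n => ?_
  have := mul_le_mul_of_nonneg_left (geomSumSum_mul_add_le ht m n)
    (mul_nonneg (hp.nonneg m) (hp.nonneg n))
  linear_combination this

lemma gfun_eq_gfunExt (hp : IsProbMass (μ i)) (h1 : Summable fun m : ℕ => (m : ℝ) * μ i m)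
    (hpos : 0 < offMean μ i) (ht : t ∈ Set.Ico (0 : ℝ) 1) : gfun μ i t = gfunExt μ i t := by
  have ht' := Set.Ico_subset_Icc_self ht
  have hslope := pgfSlope_pos hp h1 hpos ht'
  have h1t : 0 < 1 - t := sub_pos.2 ht.2
  rw [gfun, gfunExt, one_sub_pgf_eq hp ht', div_sub_div _ _ (by positivity) (by positivity),
    div_eq_div_iff (by positivity) (by positivity)]
  linear_combination (1 - t) * pgfSlope μ i t * offMean μ i * offMean_sub_pgfSlope_eq hp h1 ht'

lemma gfunExt_mem_Icc (hp : IsProbMass (μ i)) (h1 : Summable fun m : ℕ => (m : ℝ) * μ i m)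
    (h2 : Summable fun m : ℕ => (m : ℝ) ^ 2 * μ i m) (hpos : 0 < offMean μ i)
    (ht : t ∈ Set.Icc (0 : ℝ) 1) :
    gfunExt μ i t ∈ Set.Icc 0 (facMom2 μ i / offMean μ i ^ 2) := by
  have hslope := pgfSlope_pos hp h1 hpos ht
  have h₂ := pgfSlope₂_nonneg hp ht.1
  refine ⟨by unfold gfunExt; positivity, ?_⟩
  rw [gfunExt, div_le_div_iff₀ (by positivity) (by positivity)]
  nlinarith [mul_le_mul_of_nonneg_right (pgfSlope₂_mul_offMean_le hp h1 h2 ht) hpos.le]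

lemma continuousOn_gfunExt (hp : IsProbMass (μ i)) (h1 : Summable fun m : ℕ => (m : ℝ) * μ i m)
    (h2 : Summable fun m : ℕ => (m : ℝ) ^ 2 * μ i m) (hpos : 0 < offMean μ i) :
    ContinuousOn (gfunExt μ i) (Set.Icc 0 1) := by
  have hG : ContinuousOn (pgfSlope μ i) (Set.Icc 0 1) :=
    continuousOn_tsum (fun m => ((continuous_geomSum m).const_mul _).continuousOn) h1
      fun m _ ht => norm_mul_geomSum_le hp ht m
  have hA : ContinuousOn (pgfSlope₂ μ i) (Set.Icc 0 1) :=
    continuousOn_tsum (fun m => ((continuous_geomSumSum m).const_mul _).continuousOn) h2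
      fun m _ ht => norm_mul_geomSumSum_le hp ht m
  exact hA.div (hG.mul continuousOn_const) fun t ht =>
    (mul_pos (pgfSlope_pos hp h1 hpos ht) hpos).ne'

lemma pgf_lt_one (hp : IsProbMass (μ i)) (h1 : Summable fun m : ℕ => (m : ℝ) * μ i m)
    (hpos : 0 < offMean μ i) (ht : t ∈ Set.Ico (0 : ℝ) 1) : pgf μ i t < 1 := by
  have ht' := Set.Ico_subset_Icc_self ht
  have := mul_pos (sub_pos.2 ht.2) (pgfSlope_pos hp h1 hpos ht')
  linarith [one_sub_pgf_eq hp ht']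

end Slope

section PowerSeriesENNReal

open PowerSeries

noncomputable def ennEval (A : PowerSeries ℝ≥0∞) (u : ℝ≥0∞) : ℝ≥0∞ :=
  ∑' k, coeff k A * u ^ k

lemma ennEval_one (u : ℝ≥0∞) : ennEval 1 u = 1 := by
  simp [ennEval, coeff_one]

lemma ennEval_X (u : ℝ≥0∞) : ennEval X u = u := by
  simp [ennEval, coeff_X]

lemma ennEval_mul (A B : PowerSeries ℝ≥0∞) (u : ℝ≥0∞) :
    ennEval (A * B) u = ennEval A u * ennEval B u := by
  let e := Finset.HasAntidiagonal.sigmaAntidiagonalEquivProd (A := ℕ)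
  calc ennEval (A * B) u
      = ∑' n, ∑' kl : Finset.HasAntidiagonal.antidiagonal n,
          coeff kl.1.1 A * u ^ kl.1.1 * (coeff kl.1.2 B * u ^ kl.1.2) := by
        refine tsum_congr fun n => ?_
        rw [tsum_fintype, Finset.sum_coe_sort _ (fun kl : ℕ × ℕ =>
          coeff kl.1 A * u ^ kl.1 * (coeff kl.2 B * u ^ kl.2)), coeff_mul, Finset.sum_mul]
        refine Finset.sum_congr rfl fun kl hkl => ?_
        rw [← Finset.HasAntidiagonal.mem_antidiagonal.1 hkl, pow_add]; ring
    _ = ∑' kl : ℕ × ℕ, coeff kl.1 A * u ^ kl.1 * (coeff kl.2 B * u ^ kl.2) := by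
        exact (ENNReal.tsum_sigma' (fun x : Σ n, Finset.HasAntidiagonal.antidiagonal n =>
          coeff x.2.1.1 A * u ^ x.2.1.1 * (coeff x.2.1.2 B * u ^ x.2.1.2))).symm.trans
          (e.tsum_eq fun kl => coeff kl.1 A * u ^ kl.1 * (coeff kl.2 B * u ^ kl.2))
    _ = ennEval A u * ennEval B u := by
        rw [ENNReal.tsum_prod', ennEval, ennEval, ← ENNReal.tsum_mul_right]
        simp_rw [ENNReal.tsum_mul_left]

lemma ennEval_pow (A : PowerSeries ℝ≥0∞) (u : ℝ≥0∞) (m : ℕ) :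
    ennEval (A ^ m) u = ennEval A u ^ m := by
  induction m with
  | zero => simp [ennEval_one]
  | succ m ih => rw [pow_succ, ennEval_mul, ih, pow_succ]

noncomputable def ennComp (P A : PowerSeries ℝ≥0∞) : PowerSeries ℝ≥0∞ :=
  mk fun k => ∑' m, coeff m P * coeff k (A ^ m)

lemma ennEval_ennComp (P A : PowerSeries ℝ≥0∞) (u : ℝ≥0∞) :
    ennEval (ennComp P A) u = ennEval P (ennEval A u) := by
  calc ennEval (ennComp P A) u = ∑' k, ∑' m, coeff m P * (coeff k (A ^ m) * u ^ k) := by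
        refine tsum_congr fun k => ?_
        rw [ennComp, coeff_mk, ← ENNReal.tsum_mul_right]
        simp_rw [mul_assoc]
    _ = ∑' m, coeff m P * ennEval (A ^ m) u := by
        rw [ENNReal.tsum_comm]; simp_rw [ENNReal.tsum_mul_left]; rfl
    _ = ennEval P (ennEval A u) := by simp_rw [ennEval_pow]; rfl

lemma pow_mul_ennEval_add_le (A : PowerSeries ℝ≥0∞) {u v : ℝ≥0∞} (hu : u ≤ 1) (hv : v ≤ 1)
    (M : ℕ) :
    v ^ M * ennEval A u + ennEval A 0 ≤
      ennEval A v + v ^ M * ennEval A 0 + (v * u) ^ M * ennEval A 1 := by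
  simp only [ennEval, ← ENNReal.tsum_mul_left, ← ENNReal.tsum_add]
  refine ENNReal.tsum_le_tsum fun k => ?_
  rcases k.eq_zero_or_pos with rfl | hk
  · simp only [pow_zero, mul_one]
    calc v ^ M * coeff 0 A + coeff 0 A = coeff 0 A + v ^ M * coeff 0 A := add_comm _ _
      _ ≤ _ := le_self_add
  · simp only [zero_pow hk.ne', mul_zero, add_zero, one_pow, mul_one]
    have hterm : v ^ M * u ^ k ≤ v ^ k + (v * u) ^ M := by
      rcases le_total k M with hkM | hMk
      · have hvM : v ^ M ≤ v ^ k := pow_le_pow_right_of_le_one' hv hkM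
        have huk : u ^ k ≤ 1 := pow_le_one₀ zero_le hu
        calc v ^ M * u ^ k ≤ v ^ k * 1 := by gcongr
          _ ≤ _ := by rw [mul_one]; exact le_self_add
      · have huk : u ^ k ≤ u ^ M := pow_le_pow_right_of_le_one' hu hMk
        calc v ^ M * u ^ k ≤ v ^ M * u ^ M := by gcongr
          _ = (v * u) ^ M := (mul_pow v u M).symm
          _ ≤ _ := le_add_self
    calc v ^ M * (coeff k A * u ^ k) = coeff k A * (v ^ M * u ^ k) := by ring
      _ ≤ coeff k A * (v ^ k + (v * u) ^ M) := by gcongr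
      _ = _ := by ring

lemma pow_mul_sub_le_of_ennEval {φ : ℝ → ℝ} {A : PowerSeries ℝ≥0∞}
    (hA : ∀ t ∈ Set.Icc (0 : ℝ) 1, ENNReal.ofReal (φ t) = ennEval A (ENNReal.ofReal t))
    (hφ : ∀ t ∈ Set.Icc (0 : ℝ) 1, 0 ≤ φ t) {r c : ℝ} (hr : r ∈ Set.Icc (0 : ℝ) 1)
    (hc : c ∈ Set.Icc (0 : ℝ) 1) (M : ℕ) :
    c ^ M * (φ r - φ 0) ≤ φ c - φ 0 + (c * r) ^ M * φ 1 := by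
  have h0 := hA 0 ⟨le_rfl, zero_le_one⟩
  have h1 := hA 1 ⟨zero_le_one, le_rfl⟩
  rw [ENNReal.ofReal_zero] at h0
  rw [ENNReal.ofReal_one] at h1
  have key := pow_mul_ennEval_add_le A (ENNReal.ofReal_le_one.2 hr.2)
    (ENNReal.ofReal_le_one.2 hc.2) M
  have hcr : 0 ≤ c * r := mul_nonneg hc.1 hr.1
  have hφ0 := hφ 0 ⟨le_rfl, zero_le_one⟩
  have hφc := hφ c hc
  have hφr := mul_nonneg (pow_nonneg hc.1 M) (hφ r hr)
  have hcφ0 := mul_nonneg (pow_nonneg hc.1 M) hφ0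
  have hφ1 := mul_nonneg (pow_nonneg hcr M) (hφ 1 ⟨zero_le_one, le_rfl⟩)
  rw [← h0, ← h1, ← hA r hr, ← hA c hc, ← ENNReal.ofReal_mul hc.1, ← ENNReal.ofReal_pow hc.1,
    ← ENNReal.ofReal_pow hcr, ← ENNReal.ofReal_mul (pow_nonneg hc.1 M),
    ← ENNReal.ofReal_mul (pow_nonneg hc.1 M), ← ENNReal.ofReal_mul (pow_nonneg hcr M),
    ← ENNReal.ofReal_add, ← ENNReal.ofReal_add, ← ENNReal.ofReal_add,
    ENNReal.ofReal_le_ofReal_iff] at key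
  · linarith
  all_goals linarith

end PowerSeriesENNReal

section Compo

variable {𝕏 : Type*} {μ : 𝕏 → ℕ → ℝ} {i : 𝕏} {t : ℝ}

lemma ofReal_pgf (hp : IsProbMass (μ i)) (ht : t ∈ Set.Icc (0 : ℝ) 1) :
    ENNReal.ofReal (pgf μ i t) =
      ennEval (PowerSeries.mk fun m => ENNReal.ofReal (μ i m)) (ENNReal.ofReal t) := by
  rw [pgf, ENNReal.ofReal_tsum_of_nonneg (fun m => mul_nonneg (hp.nonneg m) (pow_nonneg ht.1 m))
    (hp.summable_mul_pow ht)]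
  simp only [ennEval, PowerSeries.coeff_mk, ENNReal.ofReal_mul (hp.nonneg _),
    ENNReal.ofReal_pow ht.1]

variable (x : ℕ → 𝕏) (l : List ℕ)

lemma foldr_pgf_mem_Icc (hμ : ∀ i, IsProbMass (μ i)) (ht : t ∈ Set.Icc (0 : ℝ) 1) :
    l.foldr (fun k t => pgf μ (x k) t) t ∈ Set.Icc (0 : ℝ) 1 := by
  induction l with
  | nil => exact ht
  | cons k l ih => exact pgf_mem_Icc (hμ _) ih

variable {x} {a b : ℕ} {s : ℝ}

lemma compo_of_lt (h : b < a) (s : ℝ) : compo μ x a b s = s := by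
  simp [compo, Nat.sub_eq_zero_of_le h]

lemma compo_succ (h : a ≤ b + 1) (s : ℝ) :
    compo μ x a (b + 1) s = compo μ x a b (pgf μ (x (b + 1)) s) := by
  rw [compo, show b + 1 + 1 - a = b + 1 - a + 1 by omega, List.range'_concat,
    show a + 1 * (b + 1 - a) = b + 1 by omega, List.foldr_append]
  rfl

lemma compo_mem_Icc (hμ : ∀ i, IsProbMass (μ i)) (hs : s ∈ Set.Icc (0 : ℝ) 1) :
    compo μ x a b s ∈ Set.Icc (0 : ℝ) 1 :=
  foldr_pgf_mem_Icc x _ hμ hs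

lemma compo_mem_Ico (hμ : ∀ i, IsProbMass (μ i))
    (h1 : ∀ i, Summable fun m : ℕ => (m : ℝ) * μ i m) (hpos : ∀ i, 0 < offMean μ i)
    (hs : s ∈ Set.Ico (0 : ℝ) 1) : compo μ x a b s ∈ Set.Ico (0 : ℝ) 1 := by
  unfold compo
  induction List.range' a (b + 1 - a) with
  | nil => exact hs
  | cons k l ih => exact ⟨pgf_nonneg (hμ _) ih.1, pgf_lt_one (hμ _) (h1 _) (hpos _) ih⟩

lemma compo_monotoneOn (hμ : ∀ i, IsProbMass (μ i)) :
    MonotoneOn (compo μ x a b) (Set.Icc 0 1) := by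
  unfold compo
  induction List.range' a (b + 1 - a) with
  | nil => exact monotoneOn_id
  | cons k l ih =>
    exact fun t ht u hu htu => pgf_monotoneOn (hμ _) (foldr_pgf_mem_Icc x l hμ ht)
      (foldr_pgf_mem_Icc x l hμ hu) (ih ht hu htu)

lemma exists_ennEval_compo (hμ : ∀ i, IsProbMass (μ i)) :
    ∃ A : PowerSeries ℝ≥0∞, ∀ t ∈ Set.Icc (0 : ℝ) 1,
      ENNReal.ofReal (compo μ x a b t) = ennEval A (ENNReal.ofReal t) := by
  unfold compo
  induction List.range' a (b + 1 - a) with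
  | nil => exact ⟨PowerSeries.X, fun t _ => (ennEval_X _).symm⟩
  | cons k l ih =>
    obtain ⟨A, hA⟩ := ih
    refine ⟨ennComp (PowerSeries.mk fun m => ENNReal.ofReal (μ (x k) m)) A, fun t ht => ?_⟩
    rw [ennEval_ennComp, ← hA t ht, List.foldr_cons,
      ofReal_pgf (hμ _) (foldr_pgf_mem_Icc x l hμ ht)]

end Compo

section Convergence

variable {𝕏 : Type*} {μ : 𝕏 → ℕ → ℝ} {x : ℕ → 𝕏} {a b : ℕ} {s : ℝ}

lemma compo_zero_le (hμ : ∀ i, IsProbMass (μ i)) (hs : s ∈ Set.Icc (0 : ℝ) 1) :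
    compo μ x a b 0 ≤ compo μ x a b s :=
  compo_monotoneOn hμ ⟨le_rfl, zero_le_one⟩ hs hs.1

lemma monotone_compo_zero (hμ : ∀ i, IsProbMass (μ i)) : Monotone fun n => compo μ x a n 0 := by
  refine monotone_nat_of_le_succ fun n => ?_
  rcases lt_or_ge (n + 1) a with h | h
  · rw [compo_of_lt h, compo_of_lt (by omega)]
  · rw [compo_succ h]
    exact compo_zero_le hμ (pgf_mem_Icc (hμ _) ⟨le_rfl, zero_le_one⟩)

lemma exists_tendsto_compo_zero (hμ : ∀ i, IsProbMass (μ i)) :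
    ∃ q, Tendsto (fun n => compo μ x a n 0) atTop (𝓝 q) :=
  ⟨_, tendsto_atTop_ciSup (monotone_compo_zero hμ)
    ⟨1, Set.forall_mem_range.2 fun n => (compo_mem_Icc (b := n) hμ ⟨le_rfl, zero_le_one⟩).2⟩⟩

lemma compo_succ_sub_le_of_eq_zero (hμ : ∀ i, IsProbMass (μ i)) (h : a ≤ b + 1)
    (h0 : μ (x (b + 1)) 0 = 0) (hs : s ∈ Set.Icc (0 : ℝ) 1) :
    compo μ x a (b + 1) s - compo μ x a (b + 1) 0 ≤ compo μ x a b s - compo μ x a b 0 := by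
  rw [compo_succ h, compo_succ h, pgf_zero, h0]
  linarith [compo_monotoneOn (x := x) (a := a) (b := b) hμ (pgf_mem_Icc (hμ _) hs) hs
    (pgf_le_self (hμ _) h0 hs)]

lemma pow_mul_compo_succ_sub_le (hμ : ∀ i, IsProbMass (μ i)) (h : a ≤ b + 1) {c r : ℝ}
    (hc : 0 ≤ c) (hcμ : c ≤ μ (x (b + 1)) 0) (hr : pgf μ (x (b + 1)) s ≤ r) (hr1 : r ≤ 1)
    (hs : s ∈ Set.Icc (0 : ℝ) 1) (M : ℕ) :
    c ^ M * (compo μ x a (b + 1) s - compo μ x a (b + 1) 0) ≤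
      compo μ x a (b + 1) 0 - compo μ x a b 0 + (c * r) ^ M := by
  obtain ⟨A, hA⟩ := exists_ennEval_compo (x := x) (a := a) (b := b) hμ
  have hfs := pgf_mem_Icc (hμ (x (b + 1))) hs
  have hf0 := pgf_mem_Icc (hμ (x (b + 1))) ⟨le_rfl, zero_le_one⟩
  rw [pgf_zero] at hf0
  have hr' : r ∈ Set.Icc (0 : ℝ) 1 := ⟨hfs.1.trans hr, hr1⟩
  have hc' : c ∈ Set.Icc (0 : ℝ) 1 := ⟨hc, hcμ.trans hf0.2⟩
  have key := pow_mul_sub_le_of_ennEval hA (fun t ht => (compo_mem_Icc hμ ht).1) hr' hc' M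
  have hmono := compo_monotoneOn (x := x) (a := a) (b := b) hμ
  have h1 := (compo_mem_Icc (μ := μ) (x := x) (a := a) (b := b) hμ ⟨zero_le_one, le_rfl⟩).2
  rw [compo_succ h, compo_succ h, pgf_zero]
  have hstep : compo μ x a b (pgf μ (x (b + 1)) s) - compo μ x a b (μ (x (b + 1)) 0) ≤
      compo μ x a b r - compo μ x a b 0 := by
    linarith [hmono hfs hr' hr, compo_zero_le (x := x) (a := a) (b := b) hμ hf0]
  linarith [mul_le_mul_of_nonneg_left hstep (pow_nonneg hc M), hmono hc' hf0 hcμ,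
    mul_le_mul_of_nonneg_left h1 (pow_nonneg (mul_nonneg hc hr'.1) M)]

lemma tendsto_compo_sub_of_eventually_eq_zero (hμ : ∀ i, IsProbMass (μ i))
    (hev : ∀ᶠ b in atTop, μ (x (b + 1)) 0 = 0) (hs : s ∈ Set.Icc (0 : ℝ) 1) :
    ∃ L, Tendsto (fun n => compo μ x a n s - compo μ x a n 0) atTop (𝓝 L) := by
  obtain ⟨N, hN⟩ := eventually_atTop.1 hev
  have hanti : Antitone fun n => compo μ x a (n + (N + a)) s - compo μ x a (n + (N + a)) 0 :=
    antitone_nat_of_succ_le fun n => by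
      rw [add_right_comm]
      exact compo_succ_sub_le_of_eq_zero hμ (by omega) (hN _ (by omega)) hs
  have hbdd : BddBelow (Set.range fun n =>
      compo μ x a (n + (N + a)) s - compo μ x a (n + (N + a)) 0) :=
    ⟨0, Set.forall_mem_range.2 fun n => sub_nonneg.2 (compo_zero_le hμ hs)⟩
  exact ⟨_, (tendsto_add_atTop_iff_nat (N + a)).1 (tendsto_atTop_ciInf hanti hbdd)⟩

lemma tendsto_compo_sub_of_frequently_pos (hμ : ∀ i, IsProbMass (μ i)) {c r : ℝ} (hc : 0 < c)
    (hcμ : ∀ i, 0 < μ i 0 → c ≤ μ i 0) (hr : r < 1) (hrμ : ∀ i, pgf μ i s ≤ r)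
    (hfreq : ∃ᶠ b in atTop, 0 < μ (x (b + 1)) 0) (hs : s ∈ Set.Icc (0 : ℝ) 1) :
    Tendsto (fun n => compo μ x a n s - compo μ x a n 0) atTop (𝓝 0) := by
  obtain ⟨q, hq⟩ := exists_tendsto_compo_zero (x := x) (a := a) hμ
  have hΔ : Tendsto (fun n => compo μ x a (n + 1) 0 - compo μ x a n 0) atTop (𝓝 0) := by
    simpa using (hq.comp (tendsto_add_atTop_nat 1)).sub hq
  refine tendsto_order.2 ⟨fun ε hε => Eventually.of_forall fun n =>
    hε.trans_le (sub_nonneg.2 (compo_zero_le hμ hs)), fun ε hε => ?_⟩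
  obtain ⟨M, hM⟩ := exists_pow_lt_of_lt_one (half_pos hε) hr
  have hcM : 0 < c ^ M := pow_pos hc M
  obtain ⟨N, hN⟩ := eventually_atTop.1 ((tendsto_order.1 hΔ).2 _ (mul_pos hcM (half_pos hε)))
  have hgood : ∀ b ≥ N + a, 0 < μ (x (b + 1)) 0 →
      compo μ x a (b + 1) s - compo μ x a (b + 1) 0 < ε := by
    intro b hb hpos
    have key := pow_mul_compo_succ_sub_le (a := a) hμ (by omega) hc.le (hcμ _ hpos) (hrμ _)
      hr.le hs M
    rw [mul_pow] at key
    refine lt_of_mul_lt_mul_left ?_ hcM.le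
    linarith [hN b (by omega), mul_lt_mul_of_pos_left hM hcM]
  obtain ⟨b₀, hb₀, hpos₀⟩ := frequently_atTop.1 hfreq (N + a)
  refine eventually_atTop.2 ⟨b₀ + 1, fun n hn => ?_⟩
  induction n, hn using Nat.le_induction with
  | base => exact hgood b₀ hb₀ hpos₀
  | succ n hn ih =>
    rcases ((hμ (x (n + 1))).nonneg 0).eq_or_lt with h0 | hpos
    · exact (compo_succ_sub_le_of_eq_zero hμ (by omega) h0.symm hs).trans_lt ih
    · exact hgood n (by omega) hpos

theorem exists_tendsto_compo (hμ : ∀ i, IsProbMass (μ i)) {c r : ℝ} (hc : 0 < c)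
    (hcμ : ∀ i, 0 < μ i 0 → c ≤ μ i 0) (hr : r < 1) (hrμ : ∀ i, pgf μ i s ≤ r)
    (hs : s ∈ Set.Icc (0 : ℝ) 1) :
    ∃ u, Tendsto (fun n => compo μ x a n s) atTop (𝓝 u) := by
  obtain ⟨q, hq⟩ := exists_tendsto_compo_zero (x := x) (a := a) hμ
  by_cases hev : ∀ᶠ b in atTop, μ (x (b + 1)) 0 = 0
  · obtain ⟨L, hL⟩ := tendsto_compo_sub_of_eventually_eq_zero (a := a) hμ hev hs
    exact ⟨L + q, by simpa using hL.add hq⟩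
  · have hfreq : ∃ᶠ b in atTop, 0 < μ (x (b + 1)) 0 := (not_eventually.1 hev).mono
      fun b hb => lt_of_le_of_ne ((hμ _).nonneg 0) (Ne.symm hb)
    exact ⟨q, by
      simpa using (tendsto_compo_sub_of_frequently_pos (a := a) hμ hc hcμ hr hrμ hfreq hs).add hq⟩

end Convergence

lemma exists_pos_forall_le_of_pos {𝕏 : Type*} [Finite 𝕏] (f : 𝕏 → ℝ) :
    ∃ c > 0, ∀ i, 0 < f i → c ≤ f i := by
  rcases isEmpty_or_nonempty {i // 0 < f i} with h | h
  · exact ⟨1, one_pos, fun i hi => (h.false ⟨i, hi⟩).elim⟩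
  · obtain ⟨j, hj⟩ := Finite.exists_min fun i : {i // 0 < f i} => f i
    exact ⟨f j, j.2, fun i hi => hj ⟨i, hi⟩⟩

lemma le_eta {𝕏 : Type*} [Fintype 𝕏] [Nonempty 𝕏] (μ : 𝕏 → ℕ → ℝ) (i : 𝕏) :
    facMom2 μ i / offMean μ i ^ 2 ≤ eta μ :=
  le_ciSup (f := fun i => facMom2 μ i / offMean μ i ^ 2) (Set.finite_range _).bddAbove i

theorem remainder_terms_bound_and_limit_general
    {𝕏 : Type*} [Fintype 𝕏] [Nonempty 𝕏]
    (μ : 𝕏 → ℕ → ℝ)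
    (hnonneg : ∀ i m, 0 ≤ μ i m)
    (hsum : ∀ i, ∑' m : ℕ, μ i m = 1)
    (hsq_summable : ∀ i, Summable (fun m : ℕ => (m : ℝ) ^ 2 * μ i m))
    (hmean_pos : ∀ i, 0 < offMean μ i) :
    (∀ n : ℕ, 2 ≤ n → ∀ (x : ℕ → 𝕏) (s : ℝ), s ∈ Set.Ico (0 : ℝ) 1 →
      gfun μ (x 1) (compo μ x 2 n s) ∈ Set.Icc 0 (eta μ)) ∧
    (∀ (x : ℕ → 𝕏) (s : ℝ), s ∈ Set.Ico (0 : ℝ) 1 → ∀ k : ℕ, 1 ≤ k →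
      ∃ L ∈ Set.Icc 0 (eta μ),
        Tendsto (fun n : ℕ => gfun μ (x k) (compo μ x (k + 1) n s)) atTop (𝓝 L)) := by
  have hμ i : IsProbMass (μ i) := .of_tsum_eq_one (hnonneg i) (hsum i)
  have h1 i := (hμ i).summable_mul_of_summable_sq (hsq_summable i)
  have hbound i {t : ℝ} (ht : t ∈ Set.Icc (0 : ℝ) 1) : gfunExt μ i t ∈ Set.Icc 0 (eta μ) :=
    have h := gfunExt_mem_Icc (hμ i) (h1 i) (hsq_summable i) (hmean_pos i) ht
    ⟨h.1, h.2.trans (le_eta μ i)⟩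
  have hcompo {x a b s} (hs : s ∈ Set.Ico (0 : ℝ) 1) : compo μ x a b s ∈ Set.Ico (0 : ℝ) 1 :=
    compo_mem_Ico hμ h1 hmean_pos hs
  refine ⟨fun n _ x s hs => ?_, fun x s hs k _ => ?_⟩
  · rw [gfun_eq_gfunExt (hμ _) (h1 _) (hmean_pos _) (hcompo hs)]
    exact hbound _ (Set.Ico_subset_Icc_self (hcompo hs))
  obtain ⟨c, hc, hcμ⟩ := exists_pos_forall_le_of_pos fun i => μ i 0
  obtain ⟨i₀, hi₀⟩ := Finite.exists_max fun i => pgf μ i s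
  obtain ⟨u, hu⟩ := exists_tendsto_compo (x := x) (a := k + 1) hμ hc hcμ
    (pgf_lt_one (hμ i₀) (h1 i₀) (hmean_pos i₀) hs) hi₀ (Set.Ico_subset_Icc_self hs)
  have hu01 : u ∈ Set.Icc (0 : ℝ) 1 := isClosed_Icc.mem_of_tendsto hu
    (Eventually.of_forall fun n => Set.Ico_subset_Icc_self (hcompo hs))
  refine ⟨gfunExt μ (x k) u, hbound _ hu01, ?_⟩
  have hu' : Tendsto (fun n => compo μ x (k + 1) n s) atTop (𝓝[Set.Icc 0 1] u) :=
    tendsto_nhdsWithin_iff.2 ⟨hu, Eventually.of_forall fun n => Set.Ico_subset_Icc_self (hcompo hs)⟩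
  have hcont := continuousOn_gfunExt (hμ (x k)) (h1 _) (hsq_summable _) (hmean_pos _) u hu01
  exact (hcont.tendsto.comp hu').congr fun n =>
    (gfun_eq_gfunExt (hμ _) (h1 _) (hmean_pos _) (hcompo hs)).symm

theorem remainder_terms_bound_and_limit
    {𝕏 : Type*} [Fintype 𝕏] [Nonempty 𝕏]
    (μ : 𝕏 → ℕ → ℝ)
    (hnonneg : ∀ i m, 0 ≤ μ i m)
    (hsum : ∀ i, ∑' m : ℕ, μ i m = 1)
    (hmean_summable : ∀ i, Summable (fun m : ℕ => (m : ℝ) * μ i m))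
    (hsq_summable : ∀ i, Summable (fun m : ℕ => (m : ℝ) ^ 2 * μ i m))
    (hmean_pos : ∀ i, 0 < offMean μ i) :
    (∀ n : ℕ, 2 ≤ n → ∀ (x : ℕ → 𝕏) (s : ℝ), s ∈ Set.Ico (0 : ℝ) 1 →
      gfun μ (x 1) (compo μ x 2 n s) ∈ Set.Icc 0 (eta μ)) ∧
    (∀ (x : ℕ → 𝕏) (s : ℝ), s ∈ Set.Ico (0 : ℝ) 1 → ∀ k : ℕ, 1 ≤ k →
      ∃ L ∈ Set.Icc 0 (eta μ),
        Tendsto (fun n : ℕ => gfun μ (x k) (compo μ x (k + 1) n s)) atTop (𝓝 L)) :=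
  remainder_terms_bound_and_limit_general μ hnonneg hsum hsq_summable hmean_pos

end Stmt7
end

section
/- Boundary limit of g. Let ξ be an ℕ-valued random variable with 0 < 𝔼(ξ) and 𝔼(ξ²) < ∞, with probability generating function f(s) = 𝔼(s^ξ), and set g(s) = 1/(1 − f(s)) − 1/(f'(1)(1 − s)) for s ∈ [0,1). Then lim_{s→1⁻} g(s) = f''(1)/(2 f'(1)²), where f'(1) = 𝔼(ξ) and f''(1) = 𝔼(ξ(ξ − 1)). -/
open Filter Topology Finset

/-! Put A(s) = (1 - f(s))/(1 - s) and B(s) = (f'(1) - A(s))/(1 - s), so that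
g(s) = B(s)/(f'(1) A(s)). Since 1 - s^m and m - (1 + s + ⋯ + s^(m-1)) are 1 - s times geometric
sums, A and B are power series whose m-th terms are bounded on [-1, 1] by m·|p(m)| and m²·|p(m)|;
by dominated convergence they tend to f'(1) and f''(1)/2 as s → 1⁻. -/

lemma abs_geom_sum_le {s : ℝ} (hs : |s| ≤ 1) (m : ℕ) : |∑ k ∈ range m, s ^ k| ≤ m := by
  calc |∑ k ∈ range m, s ^ k| ≤ ∑ k ∈ range m, |s ^ k| := abs_sum_le_sum_abs _ _
    _ ≤ ∑ k ∈ range m, (1 : ℝ) := sum_le_sum fun k _ => by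
        rw [abs_pow]; exact pow_le_one₀ (abs_nonneg s) hs
    _ = m := by simp

lemma abs_sum_geom_sum_le {s : ℝ} (hs : |s| ≤ 1) (m : ℕ) :
    |∑ k ∈ range m, ∑ j ∈ range k, s ^ j| ≤ (m : ℝ) ^ 2 := by
  calc |∑ k ∈ range m, ∑ j ∈ range k, s ^ j|
        ≤ ∑ k ∈ range m, |∑ j ∈ range k, s ^ j| := abs_sum_le_sum_abs _ _
    _ ≤ ∑ k ∈ range m, (m : ℝ) := sum_le_sum fun k hk =>
        (abs_geom_sum_le hs k).trans (by exact_mod_cast (mem_range.1 hk).le)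
    _ = (m : ℝ) ^ 2 := by simp [sq]

lemma natCast_sub_geom_sum (s : ℝ) (m : ℕ) :
    (m : ℝ) - ∑ k ∈ range m, s ^ k = (1 - s) * ∑ k ∈ range m, ∑ j ∈ range k, s ^ j := by
  rw [mul_sum]
  simp_rw [mul_neg_geom_sum]
  simp [sum_sub_distrib]

lemma sum_range_natCast_real (m : ℕ) : ∑ k ∈ range m, (k : ℝ) = m * (m - 1) / 2 := by
  induction m with
  | zero => simp
  | succ n ih =>
    rw [sum_range_succ, ih]
    push_cast
    ring

lemma eventually_abs_le_one_nhdsLT_one : ∀ᶠ s in 𝓝[<] (1 : ℝ), |s| ≤ 1 := by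
  filter_upwards [Ioo_mem_nhdsLT (show (-1 : ℝ) < 1 by norm_num)] with s hs
  exact abs_le.2 ⟨hs.1.le, hs.2.le⟩

lemma tendsto_tsum_nhdsLT_one {F : ℕ → ℝ → ℝ} {bound : ℕ → ℝ} (hbound : Summable bound)
    (hF : ∀ m, Continuous (F m)) (hle : ∀ m s, |s| ≤ 1 → |F m s| ≤ bound m) :
    Tendsto (fun s => ∑' m, F m s) (𝓝[<] 1) (𝓝 (∑' m, F m 1)) :=
  tendsto_tsum_of_dominated_convergence hbound
    (fun m => ((hF m).tendsto 1).mono_left nhdsWithin_le_nhds)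
    (eventually_abs_le_one_nhdsLT_one.mono fun s hs m => hle m s hs)

section DiffQuot

variable (a : ℕ → ℝ)

/-- `A(s)` in series form. -/
noncomputable def firstDiffQuot (s : ℝ) : ℝ := ∑' m, a m * ∑ k ∈ range m, s ^ k

/-- `B(s)` in series form. -/
noncomputable def secondDiffQuot (s : ℝ) : ℝ :=
  ∑' m, a m * ∑ k ∈ range m, ∑ j ∈ range k, s ^ j

variable {a}

lemma abs_mul_geom_sum_le {s : ℝ} (hs : |s| ≤ 1) (m : ℕ) :
    |a m * ∑ k ∈ range m, s ^ k| ≤ |m * a m| := by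
  rw [abs_mul, abs_mul, Nat.abs_cast, mul_comm]
  exact mul_le_mul_of_nonneg_right (abs_geom_sum_le hs m) (abs_nonneg _)

lemma abs_mul_sum_geom_sum_le {s : ℝ} (hs : |s| ≤ 1) (m : ℕ) :
    |a m * ∑ k ∈ range m, ∑ j ∈ range k, s ^ j| ≤ |(m : ℝ) ^ 2 * a m| := by
  rw [abs_mul, abs_mul, abs_pow, Nat.abs_cast, mul_comm]
  exact mul_le_mul_of_nonneg_right (abs_sum_geom_sum_le hs m) (abs_nonneg _)

lemma tsum_sub_tsum_mul_pow (ha : Summable a) {s : ℝ} (hs : |s| ≤ 1) :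
    ∑' m, a m - ∑' m, a m * s ^ m = (1 - s) * firstDiffQuot a s := by
  have hpow : Summable fun m => a m * s ^ m := ha.abs.of_norm_bounded fun m => by
    rw [Real.norm_eq_abs, abs_mul, abs_pow]
    exact mul_le_of_le_one_right (abs_nonneg _) (pow_le_one₀ (abs_nonneg s) hs)
  rw [firstDiffQuot, ← ha.tsum_sub hpow, ← tsum_mul_left]
  refine tsum_congr fun m => ?_
  rw [mul_left_comm, mul_neg_geom_sum, mul_one_sub]

lemma tsum_sub_firstDiffQuot (ha₁ : Summable fun m : ℕ => (m : ℝ) * a m)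
    {s : ℝ} (hs : |s| ≤ 1) :
    ∑' m : ℕ, (m : ℝ) * a m - firstDiffQuot a s = (1 - s) * secondDiffQuot a s := by
  have hA : Summable fun m => a m * ∑ k ∈ range m, s ^ k :=
    ha₁.abs.of_norm_bounded (abs_mul_geom_sum_le hs)
  rw [firstDiffQuot, secondDiffQuot, ← ha₁.tsum_sub hA, ← tsum_mul_left]
  refine tsum_congr fun m => ?_
  rw [mul_left_comm, ← natCast_sub_geom_sum, mul_sub, mul_comm]

lemma tendsto_firstDiffQuot (ha₁ : Summable fun m : ℕ => (m : ℝ) * a m) :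
    Tendsto (firstDiffQuot a) (𝓝[<] 1) (𝓝 (∑' m : ℕ, (m : ℝ) * a m)) := by
  have hA1 : ∑' m : ℕ, (m : ℝ) * a m = ∑' m, a m * ∑ k ∈ range m, (1 : ℝ) ^ k := by
    simp [mul_comm]
  rw [hA1]
  exact tendsto_tsum_nhdsLT_one ha₁.abs (fun m => by fun_prop)
    (fun m s hs => abs_mul_geom_sum_le hs m)

lemma tendsto_secondDiffQuot (ha₂ : Summable fun m : ℕ => (m : ℝ) ^ 2 * a m) :
    Tendsto (secondDiffQuot a) (𝓝[<] 1)
      (𝓝 ((∑' m : ℕ, (m : ℝ) * ((m : ℝ) - 1) * a m) / 2)) := by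
  have hB1 : (∑' m : ℕ, (m : ℝ) * ((m : ℝ) - 1) * a m) / 2 =
      ∑' m, a m * ∑ k ∈ range m, ∑ j ∈ range k, (1 : ℝ) ^ j := by
    rw [← tsum_div_const]
    refine tsum_congr fun m => ?_
    simp only [one_pow, sum_const, card_range, nsmul_one, sum_range_natCast_real]
    ring
  rw [hB1]
  exact tendsto_tsum_nhdsLT_one ha₂.abs (fun m => by fun_prop)
    (fun m s hs => abs_mul_sum_geom_sum_le hs m)

end DiffQuot

theorem boundary_limit_of_g_general
    (p : ℕ → ℝ)
    (hp_sum : ∑' m : ℕ, p m = 1)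
    (hmean_summable : Summable (fun m : ℕ => (m : ℝ) * p m))
    (hsq_summable : Summable (fun m : ℕ => (m : ℝ) ^ 2 * p m))
    (hmean_pos : 0 < ∑' m : ℕ, (m : ℝ) * p m) :
    Tendsto
      (fun s : ℝ =>
        1 / (1 - ∑' m : ℕ, p m * s ^ m) -
          1 / ((∑' m : ℕ, (m : ℝ) * p m) * (1 - s)))
      (nhdsWithin 1 (Set.Iio 1))
      (𝓝 ((∑' m : ℕ, (m : ℝ) * ((m : ℝ) - 1) * p m) /
        (2 * (∑' m : ℕ, (m : ℝ) * p m) ^ 2))) := by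
  set μ := ∑' m : ℕ, (m : ℝ) * p m
  have hp : Summable p := by
    by_contra h
    simp [tsum_eq_zero_of_not_summable h] at hp_sum
  have hA := tendsto_firstDiffQuot hmean_summable
  have hlim := (tendsto_secondDiffQuot hsq_summable).div (hA.mul_const μ)
    (mul_self_ne_zero.2 hmean_pos.ne')
  rw [div_div, ← sq] at hlim
  refine hlim.congr' ?_
  filter_upwards [eventually_abs_le_one_nhdsLT_one, self_mem_nhdsWithin,
    hA.eventually_ne hmean_pos.ne'] with s hs hs_lt hAs
  have hs₁ : 1 - s ≠ 0 := sub_ne_zero.2 (ne_of_gt hs_lt)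
  have hf : 1 - ∑' m, p m * s ^ m = (1 - s) * firstDiffQuot p s := by
    rw [← tsum_sub_tsum_mul_pow hp hs, hp_sum]
  have hB : secondDiffQuot p s = (μ - firstDiffQuot p s) / (1 - s) :=
    eq_div_of_mul_eq hs₁ (by rw [mul_comm, tsum_sub_firstDiffQuot hmean_summable hs])
  rw [Pi.div_apply, hf, hB]
  field_simp

theorem boundary_limit_of_g
    (p : ℕ → ℝ)
    (hp_nonneg : ∀ m, 0 ≤ p m)
    (hp_sum : ∑' m : ℕ, p m = 1)
    (hmean_summable : Summable (fun m : ℕ => (m : ℝ) * p m))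
    (hsq_summable : Summable (fun m : ℕ => (m : ℝ) ^ 2 * p m))
    (hmean_pos : 0 < ∑' m : ℕ, (m : ℝ) * p m) :
    Tendsto
      (fun s : ℝ =>
        1 / (1 - ∑' m : ℕ, p m * s ^ m) -
          1 / ((∑' m : ℕ, (m : ℝ) * p m) * (1 - s)))
      (nhdsWithin 1 (Set.Iio 1))
      (𝓝 ((∑' m : ℕ, (m : ℝ) * ((m : ℝ) - 1) * p m) /
        (2 * (∑' m : ℕ, (m : ℝ) * p m) ^ 2))) :=
  boundary_limit_of_g_general p hp_sum hmean_summable hsq_summable hmean_pos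
end

section
/- Duality identity (Lemma 3.5, second identity). For every n ≥ 1, every function g : 𝕏^n → ℝ and every i, j ∈ 𝕏: 𝔼_i( g(X_1, …, X_n) ; X_{n+1} = j ) = 𝔼*_j( g(X*_n, …, X*_1) ; X*_{n+1} = i ) · ν(j)/ν(i), where 𝔼(·; A) denotes expectation restricted to the event A. -/
/-! Both sides are finite sums over the intermediate states `x ∈ 𝕏ⁿ`. The chain started at `i`
follows the path `i, x₁, …, xₙ, j` with probability the product of `P` along it; the dual chain
started at `j` follows the reversed path `j, xₙ, …, x₁, i` with probability the product of
`ν b * P b a / ν a` along it, in which the `ν`-factors telescope to `ν i / ν j`. Reindexing the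
sum by `x ↦ x ∘ Fin.rev` matches the two sums term by term. -/

open Finset Filter MeasureTheory

namespace Stmt9

section Paths

variable {𝕏 : Type*}

def pathWeight (W : 𝕏 → 𝕏 → ℝ) (n : ℕ) (p : ℕ → 𝕏) : ℝ :=
  ∏ k ∈ range n, W (p k) (p (k + 1))

lemma pathWeight_nonneg {W : 𝕏 → 𝕏 → ℝ} (hW : ∀ a b, 0 ≤ W a b) (n : ℕ) (p : ℕ → 𝕏) :
    0 ≤ pathWeight W n p :=
  prod_nonneg fun _ _ => hW _ _

lemma pathWeight_reflect (W : 𝕏 → 𝕏 → ℝ) (n : ℕ) (p : ℕ → 𝕏) :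
    pathWeight W n (fun k => p (n - k)) = pathWeight (fun a b => W b a) n p := by
  rw [pathWeight, pathWeight, ← prod_range_reflect]
  refine prod_congr rfl fun k hk => ?_
  have := mem_range.1 hk
  rw [show n - (n - 1 - k) = k + 1 by omega, show n - (n - 1 - k + 1) = k by omega]

lemma pathWeight_mul_div {ν : 𝕏 → ℝ} (hν : ∀ a, ν a ≠ 0) (W : 𝕏 → 𝕏 → ℝ) (n : ℕ) (p : ℕ → 𝕏) :
    pathWeight (fun a b => ν a * W a b / ν b) n p = ν (p 0) / ν (p n) * pathWeight W n p := by
  induction n with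
  | zero => simp [pathWeight, hν]
  | succ n ih =>
    simp only [pathWeight, prod_range_succ] at ih ⊢
    rw [ih]
    field_simp [hν]

def path {n : ℕ} (a : 𝕏) (x : Fin n → 𝕏) (b : 𝕏) : ℕ → 𝕏
  | 0 => a
  | m + 1 => if h : m < n then x ⟨m, h⟩ else b

-- An identity of functions on all of `ℕ`: past index `n + 1` both sides are `a`, the right one
-- because of truncated subtraction.
lemma path_comp_rev {n : ℕ} (a : 𝕏) (x : Fin n → 𝕏) (b : 𝕏) :
    path b (x ∘ Fin.rev) a = fun m => path a x b (n + 1 - m) := by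
  funext m
  rcases m with _ | m
  · simp [path]
  · by_cases hm : m < n
    · rw [show n + 1 - (m + 1) = n - 1 - m + 1 by omega]
      simp only [path, Function.comp_apply, hm, show n - 1 - m < n by omega, dif_pos]
      congr 1
      ext
      simp only [Fin.val_rev]
      omega
    · simp [path, hm, show n + 1 - (m + 1) = 0 by omega]

lemma prod_ite_path_eq_pathWeight (W : 𝕏 → 𝕏 → ℝ) {n : ℕ} (a : 𝕏) (x : Fin n → 𝕏) (b : 𝕏)
    (m : ℕ) :
    ∏ k ∈ range m, W (if k = 0 then a else path a x b (k - 1 + 1)) (path a x b (k + 1)) =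
      pathWeight W m (path a x b) :=
  prod_congr rfl fun k _ => by rcases k with _ | k <;> rfl

lemma forall_lt_succ_eq_path_succ_iff {n : ℕ} (a : 𝕏) (x : Fin n → 𝕏) (b : 𝕏) (q : ℕ → 𝕏) :
    (∀ k < n + 1, q (k + 1) = path a x b (k + 1)) ↔
      (∀ k : Fin n, q (k + 1) = x k) ∧ q (n + 1) = b := by
  rw [Nat.forall_lt_succ_right, Fin.forall_iff]
  simp +contextual [path]

lemma pathWeight_dual_path_comp_rev {ν : 𝕏 → ℝ} (hν : ∀ a, ν a ≠ 0) (P : 𝕏 → 𝕏 → ℝ) {n : ℕ}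
    (i j : 𝕏) (x : Fin n → 𝕏) :
    pathWeight (fun a b => ν b * P b a / ν a) (n + 1) (path j (x ∘ Fin.rev) i) =
      ν i / ν j * pathWeight P (n + 1) (path i x j) := by
  rw [path_comp_rev, pathWeight_reflect, pathWeight_mul_div hν]
  simp [path]

end Paths

section Integrals

variable {Ω α : Type*} [MeasurableSpace Ω] [MeasurableSpace α] [MeasurableSingletonClass α]
  [Fintype α]

lemma integral_comp_eq_sum (μ : Measure Ω) [IsFiniteMeasure μ] {Z : Ω → α} (hZ : Measurable Z)
    (F : α → ℝ) : ∫ ω, F (Z ω) ∂μ = ∑ x, F x * μ.real (Z ⁻¹' {x}) := by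
  rw [← integral_map hZ.aemeasurable (measurable_of_finite F).aestronglyMeasurable,
    integral_fintype Integrable.of_finite]
  refine sum_congr rfl fun x _ => ?_
  rw [smul_eq_mul, mul_comm, measureReal_def, Measure.map_apply hZ (measurableSet_singleton x),
    measureReal_def]

end Integrals

section Chain

variable {𝕏 Ω : Type*} [MeasurableSpace 𝕏] [MeasurableSingletonClass 𝕏]
  [MeasurableSpace Ω] {μ : Measure Ω} [IsProbabilityMeasure μ] {X : ℕ → Ω → 𝕏}
  {W : 𝕏 → 𝕏 → ℝ} {a : 𝕏}

lemma measure_preimage_inter_eq_ofReal_pathWeight (hX : ∀ k, Measurable (X k))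
    (hchain : ∀ (m : ℕ) (x : ℕ → 𝕏), μ {ω | X 0 ω = a ∧ ∀ k < m, X (k + 1) ω = x k} =
      ENNReal.ofReal (∏ k ∈ range m, W (if k = 0 then a else x (k - 1)) (x k)))
    {n : ℕ} (x : Fin n → 𝕏) (b : 𝕏) :
    μ ((fun ω (k : Fin n) => X (k + 1) ω) ⁻¹' {x} ∩ {ω | X (n + 1) ω = b}) =
      ENNReal.ofReal (pathWeight W (n + 1) (path a x b)) := by
  have hstart : μ {ω | X 0 ω = a}ᶜ = 0 :=
    (prob_compl_eq_zero_iff (s := {ω | X 0 ω = a}) (hX 0 (measurableSet_singleton a))).2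
      (by simpa using hchain 0 fun _ => a)
  rw [← measure_inter_conull hstart, ← prod_ite_path_eq_pathWeight,
    ← hchain (n + 1) (path a x b ·.succ)]
  congr 1
  ext ω
  simp only [Set.mem_inter_iff, Set.mem_preimage, Set.mem_singleton_iff, Set.mem_ofPred_eq,
    forall_lt_succ_eq_path_succ_iff a x b (X · ω), funext_iff]
  tauto

lemma setIntegral_eq_sum_pathWeight [Fintype 𝕏] (hX : ∀ k, Measurable (X k))
    (hW : ∀ a b, 0 ≤ W a b)
    (hchain : ∀ (m : ℕ) (x : ℕ → 𝕏), μ {ω | X 0 ω = a ∧ ∀ k < m, X (k + 1) ω = x k} =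
      ENNReal.ofReal (∏ k ∈ range m, W (if k = 0 then a else x (k - 1)) (x k)))
    {n : ℕ} (F : (Fin n → 𝕏) → ℝ) (b : 𝕏) :
    ∫ ω in {ω | X (n + 1) ω = b}, F (fun k : Fin n => X (k + 1) ω) ∂μ =
      ∑ x, F x * pathWeight W (n + 1) (path a x b) := by
  have hZ : Measurable fun ω (k : Fin n) => X (k + 1) ω := measurable_pi_lambda _ fun k => hX _
  rw [integral_comp_eq_sum _ hZ]
  refine sum_congr rfl fun x _ => ?_
  rw [measureReal_def, Measure.restrict_apply (hZ (measurableSet_singleton x)),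
    measure_preimage_inter_eq_ofReal_pathWeight hX hchain,
    ENNReal.toReal_ofReal (pathWeight_nonneg hW _ _)]

end Chain

theorem duality_identity_general
    {𝕏 : Type*} [Fintype 𝕏]
    [MeasurableSpace 𝕏] [MeasurableSingletonClass 𝕏]
    (P : 𝕏 → 𝕏 → ℝ)
    (hP_nonneg : ∀ i j, 0 ≤ P i j)
    (ν : 𝕏 → ℝ) (hν_pos : ∀ i, 0 < ν i)
    {Ω : Type*} [MeasurableSpace Ω]
    (Pr : 𝕏 → Measure Ω) (hPr : ∀ i, IsProbabilityMeasure (Pr i))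
    (X : ℕ → Ω → 𝕏) (hX : ∀ n, Measurable (X n))
    (hchain : ∀ i (n : ℕ) (x : ℕ → 𝕏),
      Pr i {ω | X 0 ω = i ∧ ∀ k < n, X (k + 1) ω = x k} =
        ENNReal.ofReal (∏ k ∈ Finset.range n, P (if k = 0 then i else x (k - 1)) (x k)))
    {Ω' : Type*} [MeasurableSpace Ω']
    (Prs : 𝕏 → Measure Ω') (hPrs : ∀ j, IsProbabilityMeasure (Prs j))
    (Y : ℕ → Ω' → 𝕏) (hY : ∀ n, Measurable (Y n))
    -- (Y_n) is the dual chain, with transition matrix P*(i,j) = ν(j)P(j,i)/ν(i):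
    (hchain_star : ∀ j (n : ℕ) (x : ℕ → 𝕏),
      Prs j {ω | Y 0 ω = j ∧ ∀ k < n, Y (k + 1) ω = x k} =
        ENNReal.ofReal (∏ k ∈ Finset.range n,
          (fun a b => ν b * P b a / ν a) (if k = 0 then j else x (k - 1)) (x k))) :
    ∀ n : ℕ, 1 ≤ n → ∀ (g : (Fin n → 𝕏) → ℝ) (i j : 𝕏),
      ∫ ω in {ω | X (n + 1) ω = j}, g (fun k : Fin n => X (k.1 + 1) ω) ∂(Pr i) =
        (∫ ω in {ω | Y (n + 1) ω = i}, g (fun k : Fin n => Y (n - k.1) ω) ∂(Prs j)) *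
          (ν j / ν i) := by
  intro n _ g i j
  have hν : ∀ a, ν a ≠ 0 := fun a => (hν_pos a).ne'
  have hdual_nonneg : ∀ a b, 0 ≤ ν b * P b a / ν a := fun a b =>
    div_nonneg (mul_nonneg (hν_pos b).le (hP_nonneg b a)) (hν_pos a).le
  have hY_rev : ∀ ω, (fun k : Fin n => Y (n - k) ω) = (fun k : Fin n => Y (k + 1) ω) ∘ Fin.rev :=
    fun ω => funext fun k => by simp only [Function.comp_apply, Fin.val_rev]; congr 1; omega
  have hrev_bij : Function.Bijective fun x : Fin n → 𝕏 => x ∘ Fin.rev :=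
    Function.Involutive.bijective fun x => by
      simp only [Function.comp_assoc, Fin.rev_involutive.comp_self, Function.comp_id]
  simp_rw [hY_rev]
  rw [setIntegral_eq_sum_pathWeight (μ := Pr i) hX hP_nonneg (hchain i),
    setIntegral_eq_sum_pathWeight (μ := Prs j) (F := fun y => g (y ∘ Fin.rev)) hY hdual_nonneg
      (hchain_star j), sum_mul]
  refine Fintype.sum_bijective _ hrev_bij _ _ fun x => ?_
  rw [pathWeight_dual_path_comp_rev hν, Function.comp_assoc, Fin.rev_involutive.comp_self,
    Function.comp_id]
  field_simp [hν i, hν j]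

theorem duality_identity
    {𝕏 : Type*} [Fintype 𝕏] [Nonempty 𝕏]
    [MeasurableSpace 𝕏] [MeasurableSingletonClass 𝕏]
    (P : 𝕏 → 𝕏 → ℝ)
    (hP_nonneg : ∀ i j, 0 ≤ P i j) (hP_row : ∀ i, ∑ j, P i j = 1)
    (ν : 𝕏 → ℝ) (hν_pos : ∀ i, 0 < ν i) (hν_sum : ∑ i, ν i = 1)
    (hν_inv : ∀ j, ∑ i, ν i * P i j = ν j)
    {Ω : Type*} [MeasurableSpace Ω]
    (Pr : 𝕏 → Measure Ω) (hPr : ∀ i, IsProbabilityMeasure (Pr i))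
    (X : ℕ → Ω → 𝕏) (hX : ∀ n, Measurable (X n))
    (hchain : ∀ i (n : ℕ) (x : ℕ → 𝕏),
      Pr i {ω | X 0 ω = i ∧ ∀ k < n, X (k + 1) ω = x k} =
        ENNReal.ofReal (∏ k ∈ Finset.range n, P (if k = 0 then i else x (k - 1)) (x k)))
    {Ω' : Type*} [MeasurableSpace Ω']
    (Prs : 𝕏 → Measure Ω') (hPrs : ∀ j, IsProbabilityMeasure (Prs j))
    (Y : ℕ → Ω' → 𝕏) (hY : ∀ n, Measurable (Y n))
    -- (Y_n) is the dual chain, with transition matrix P*(i,j) = ν(j)P(j,i)/ν(i):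
    (hchain_star : ∀ j (n : ℕ) (x : ℕ → 𝕏),
      Prs j {ω | Y 0 ω = j ∧ ∀ k < n, Y (k + 1) ω = x k} =
        ENNReal.ofReal (∏ k ∈ Finset.range n,
          (fun a b => ν b * P b a / ν a) (if k = 0 then j else x (k - 1)) (x k))) :
    ∀ n : ℕ, 1 ≤ n → ∀ (g : (Fin n → 𝕏) → ℝ) (i j : 𝕏),
      ∫ ω in {ω | X (n + 1) ω = j}, g (fun k : Fin n => X (k.1 + 1) ω) ∂(Pr i) =
        (∫ ω in {ω | Y (n + 1) ω = i}, g (fun k : Fin n => Y (n - k.1) ω) ∂(Prs j)) *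
          (ν j / ν i) :=
  duality_identity_general P hP_nonneg ν hν_pos Pr hPr X hX hchain Prs hPrs Y hY hchain_star

end Stmt9
end

section
/- Normalized transfer kernel (Lemma 3.12). Let λ ∈ ℝ, and suppose k > 0 and v : 𝕏 → (0,∞) satisfy Σ_j P(i,j) e^{λρ(j)} v(j) = k·v(i) for every i ∈ 𝕏. Define P̃(i,j) = e^{λρ(j)} v(j) P(i,j)/(k·v(i)). Then P̃ is a stochastic matrix; if P satisfies Condition 1 (primitivity) then so does P̃; and if P additionally satisfies Condition 3 (non-lattice, with ρ) then P̃ satisfies Condition 3 (with the same ρ). -/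
/- STATEMENT 11: Normalized transfer kernel (Lemma 3.12).
𝕏 finite nonempty, P stochastic, ρ : 𝕏 → ℝ. Let λ ∈ ℝ, k > 0 and v : 𝕏 → (0,∞)
satisfy Σ_j P(i,j) e^{λρ(j)} v(j) = k·v(i) for all i. Define
P̃(i,j) = e^{λρ(j)} v(j) P(i,j)/(k·v(i)). Then P̃ is a stochastic matrix;
if P is primitive (Condition 1) then so is P̃; and if P additionally satisfies
the non-lattice Condition 3 (with ρ) then so does P̃ (with the same ρ). -/

open Finset

namespace Stmt11

/-- Condition 1 (primitivity): some matrix power of `P` has all entries positive. -/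
def Primitive {𝕏 : Type*} [Fintype 𝕏] [DecidableEq 𝕏] (P : 𝕏 → 𝕏 → ℝ) : Prop :=
  ∃ k₀ : ℕ, 1 ≤ k₀ ∧ ∀ i j, 0 < ((Matrix.of P) ^ k₀) i j

/-- Condition 3 (non-lattice). -/
def NonLattice {𝕏 : Type*} (P : 𝕏 → 𝕏 → ℝ) (ρ : 𝕏 → ℝ) : Prop :=
  ∀ θ a : ℝ, ∃ (n : ℕ) (x : ℕ → 𝕏),
    0 < (∏ k ∈ Finset.range n, P (x k) (x (k + 1))) * P (x n) (x 0) ∧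
    ∀ z : ℤ, (∑ k ∈ Finset.range (n + 1), ρ (x k)) - (n + 1) * θ ≠ a * z

/-- the normalized transfer kernel P̃(i,j) = e^{λρ(j)} v(j) P(i,j) / (k v(i)). -/
noncomputable def normKernel {𝕏 : Type*} (P : 𝕏 → 𝕏 → ℝ) (ρ : 𝕏 → ℝ) (lam k : ℝ)
    (v : 𝕏 → ℝ) (i j : 𝕏) : ℝ :=
  Real.exp (lam * ρ j) * v j * P i j / (k * v i)


lemma pow_nonneg_entry {𝕏 : Type*} [Fintype 𝕏] [DecidableEq 𝕏] {Q : 𝕏 → 𝕏 → ℝ}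
    (h : ∀ i j, 0 ≤ Q i j) : ∀ n i j, 0 ≤ ((Matrix.of Q) ^ n) i j := by
  intro n
  induction n with
  | zero =>
    intro i j
    simp only [pow_zero, Matrix.one_apply]
    split_ifs <;> norm_num
  | succ n ih =>
    intro i j
    rw [pow_succ, Matrix.mul_apply]
    exact Finset.sum_nonneg fun l _ => mul_nonneg (ih i l) (h l j)

lemma pow_pos_entry {𝕏 : Type*} [Fintype 𝕏] [DecidableEq 𝕏] {P Q : 𝕏 → 𝕏 → ℝ}
    (hP : ∀ i j, 0 ≤ P i j) (hQ : ∀ i j, 0 ≤ Q i j)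
    (himp : ∀ i j, 0 < P i j → 0 < Q i j) :
    ∀ n i j, 0 < ((Matrix.of P) ^ n) i j → 0 < ((Matrix.of Q) ^ n) i j := by
  intro n
  induction n with
  | zero =>
    intro i j h0
    simp only [pow_zero] at *
    exact h0
  | succ n ih =>
    intro i j h0
    rw [pow_succ, Matrix.mul_apply] at h0 ⊢
    have hex : ∃ l ∈ Finset.univ (α := 𝕏),
        (0 : ℝ) < ((Matrix.of P) ^ n) i l * (Matrix.of P) l j := by
      by_contra hc
      push_neg at hc
      have : (∑ l, ((Matrix.of P) ^ n) i l * (Matrix.of P) l j) ≤ 0 :=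
        Finset.sum_nonpos fun l hl => hc l hl
      linarith
    obtain ⟨l, -, hl⟩ := hex
    have h1 : 0 < ((Matrix.of P) ^ n) i l := by
      rcases mul_pos_iff.mp hl with ⟨h1, _⟩ | ⟨_, h2⟩
      · exact h1
      · exact absurd h2 (not_lt.mpr (hP l j))
    have h2 : 0 < (Matrix.of P) l j := by
      rcases mul_pos_iff.mp hl with ⟨_, h2⟩ | ⟨h1, _⟩
      · exact h2
      · exact absurd h1 (not_lt.mpr (pow_nonneg_entry hP n i l))
    refine Finset.sum_pos' (fun m _ => mul_nonneg (pow_nonneg_entry hQ n i m) (hQ m j))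
      ⟨l, Finset.mem_univ l, mul_pos (ih i l h1) (himp l j h2)⟩

theorem normalized_transfer_kernel
    {𝕏 : Type*} [Fintype 𝕏] [Nonempty 𝕏] [DecidableEq 𝕏]
    (P : 𝕏 → 𝕏 → ℝ) (ρ : 𝕏 → ℝ)
    (hP_nonneg : ∀ i j, 0 ≤ P i j) (hP_row : ∀ i, ∑ j, P i j = 1)
    (lam k : ℝ) (hk : 0 < k) (v : 𝕏 → ℝ) (hv : ∀ i, 0 < v i)
    (heig : ∀ i, ∑ j, P i j * Real.exp (lam * ρ j) * v j = k * v i) :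
    ((∀ i j, 0 ≤ normKernel P ρ lam k v i j) ∧
      (∀ i, ∑ j, normKernel P ρ lam k v i j = 1)) ∧
    (Primitive P → Primitive (normKernel P ρ lam k v)) ∧
    (Primitive P → NonLattice P ρ → NonLattice (normKernel P ρ lam k v) ρ) := by
  have hnn : ∀ i j, 0 ≤ normKernel P ρ lam k v i j := fun i j =>
    div_nonneg (mul_nonneg (mul_nonneg (Real.exp_pos _).le (hv j).le) (hP_nonneg i j))
      (mul_pos hk (hv i)).le
  have hposiff : ∀ i j, 0 < P i j → 0 < normKernel P ρ lam k v i j := fun i j h =>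
    div_pos (mul_pos (mul_pos (Real.exp_pos _) (hv j)) h) (mul_pos hk (hv i))
  have hrow : ∀ i, ∑ j, normKernel P ρ lam k v i j = 1 := by
    intro i
    have hne : (k * v i) ≠ 0 := (mul_pos hk (hv i)).ne'
    rw [show (∑ j, normKernel P ρ lam k v i j)
        = (∑ j, P i j * Real.exp (lam * ρ j) * v j) / (k * v i) by
      rw [Finset.sum_div]; exact Finset.sum_congr rfl fun j _ => by
        unfold normKernel; ring_nf]
    rw [heig i, div_self hne]
  refine ⟨⟨hnn, hrow⟩, ?_, ?_⟩
  · rintro ⟨k₀, hk₀, hpos⟩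
    exact ⟨k₀, hk₀, fun i j => pow_pos_entry hP_nonneg hnn hposiff k₀ i j (hpos i j)⟩
  · rintro - hNL θ a
    obtain ⟨n, x, hpos, hne⟩ := hNL θ a
    have hprod : 0 < ∏ m ∈ Finset.range n, P (x m) (x (m + 1)) := by
      rcases mul_pos_iff.mp hpos with ⟨h1, _⟩ | ⟨_, h2⟩
      · exact h1
      · exact absurd h2 (not_lt.mpr (hP_nonneg _ _))
    have hlast : 0 < P (x n) (x 0) := by
      rcases mul_pos_iff.mp hpos with ⟨_, h2⟩ | ⟨h1, _⟩
      · exact h2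
      · exact absurd h1 (not_lt.mpr (Finset.prod_nonneg fun m _ => hP_nonneg _ _))
    have hfac : ∀ m ∈ Finset.range n, 0 < P (x m) (x (m + 1)) := by
      intro m hm
      by_contra hc
      have h0 : P (x m) (x (m + 1)) = 0 := le_antisymm (not_lt.mp hc) (hP_nonneg _ _)
      exact absurd (Finset.prod_eq_zero hm h0) (ne_of_gt hprod)
    exact ⟨n, x, mul_pos (Finset.prod_pos fun m hm => hposiff _ _ (hfac m hm))
      (hposiff _ _ hlast), hne⟩


end Stmt11
end

section
/- Existence of the spectral limit k(λ). Assume Condition 1 (primitivity). For every λ ∈ ℝ there exists k(λ) > 0 such that for every i ∈ 𝕏 and every non-negative, not identically zero function g : 𝕏 → ℝ, (𝔼_i(e^{λ S_n} g(X_n)))^{1/n} → k(λ) as n → ∞; in particular, 𝔼_i(e^{λS_n})^{1/n} → k(λ) for every i, and the limit does not depend on i. -/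
open Finset Filter Topology MeasureTheory

namespace Stmt12

/-- Condition 1 (primitivity): some matrix power of `P` has all entries positive. -/
def Primitive {𝕏 : Type*} [Fintype 𝕏] [DecidableEq 𝕏] (P : 𝕏 → 𝕏 → ℝ) : Prop :=
  ∃ k₀ : ℕ, 1 ≤ k₀ ∧ ∀ i j, 0 < ((Matrix.of P) ^ k₀) i j

end Stmt12

/-!
Put `Q(a, b) = P(a, b) e^{λ ρ(b)}`. Summing over paths, `𝔼_i(e^{λ S_n} g(X_n)) = (Qⁿ g)(i)`, and
`Q` has the zero pattern of `P`, so it is primitive. The total mass `σ(n) = ∑_{a,b} Qⁿ(a, b)` is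
submultiplicative and at least `εⁿ` (`ε` the least row sum of `Q`), so by Fekete's lemma
`σ(n)^{1/n} → k > 0`. If every entry of `Q^{k₀}` is at least `c₀ > 0`, then
`Qⁿ = Q^{k₀} Q^{n - 2k₀} Q^{k₀}` has every entry at least `c₀² σ(n - 2k₀) ≥ c₀² σ(n) / σ(2k₀)`.
Hence `(Qⁿ g)(i)` lies between two positive multiples of `σ(n)`, and its `n`-th root also tends
to `k`.
-/

lemma tendsto_rpow_inv_of_le_of_le {u v : ℕ → ℝ} {L c₁ c₂ : ℝ}
    (hu : Tendsto (fun n : ℕ => Real.log (u n) / n) atTop (𝓝 L)) (hu0 : ∀ n, 0 < u n)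
    (hc₁ : 0 < c₁) (hv : ∀ᶠ n in atTop, c₁ * u n ≤ v n ∧ v n ≤ c₂ * u n) :
    Tendsto (fun n : ℕ => v n ^ (n : ℝ)⁻¹) atTop (𝓝 (Real.exp L)) := by
  have hlog : ∀ c, 0 < c → Tendsto (fun n : ℕ => Real.log (c * u n) / n) atTop (𝓝 L) :=
    fun c hc => by
      simpa [Real.log_mul hc.ne' (hu0 _).ne', add_div] using
        (tendsto_const_div_atTop_nhds_zero_nat (Real.log c)).add hu
  obtain ⟨n, h₁, h₂⟩ := hv.exists
  have hc₂ : 0 < c₂ :=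
    pos_of_mul_pos_left ((mul_pos hc₁ (hu0 n)).trans_le (h₁.trans h₂)) (hu0 n).le
  have hv0 : ∀ᶠ n in atTop, 0 < v n := hv.mono fun n hn => (mul_pos hc₁ (hu0 n)).trans_le hn.1
  have hlogv : Tendsto (fun n : ℕ => Real.log (v n) / n) atTop (𝓝 L) := by
    refine tendsto_of_tendsto_of_tendsto_of_le_of_le' (hlog c₁ hc₁) (hlog c₂ hc₂) ?_ ?_
    · filter_upwards [hv] with n hn
      exact div_le_div_of_nonneg_right (Real.log_le_log (mul_pos hc₁ (hu0 n)) hn.1) n.cast_nonneg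
    · filter_upwards [hv, hv0] with n hn hvn
      exact div_le_div_of_nonneg_right (Real.log_le_log hvn hn.2) n.cast_nonneg
  refine ((Real.continuous_exp.tendsto L).comp hlogv).congr' ?_
  filter_upwards [hv0] with n hn
  rw [Function.comp_apply, Real.rpow_def_of_pos hn, div_eq_mul_inv]

namespace Matrix

section EntrySum

variable {l m n o : Type*} [Fintype n]

lemma apply_mul_le_mulVec_apply {A : Matrix m n ℝ} {g : n → ℝ} (hA : ∀ i j, 0 ≤ A i j)
    (hg : ∀ j, 0 ≤ g j) (i : m) (j : n) : A i j * g j ≤ (A *ᵥ g) i :=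
  single_le_sum (f := fun j => A i j * g j) (fun j _ => mul_nonneg (hA i j) (hg j)) (mem_univ j)

variable [Fintype m]

def entrySum (A : Matrix m n ℝ) : ℝ := ∑ i, ∑ j, A i j

lemma apply_le_entrySum {A : Matrix m n ℝ} (hA : ∀ i j, 0 ≤ A i j) (i : m) (j : n) :
    A i j ≤ A.entrySum :=
  (single_le_sum (fun j _ => hA i j) (mem_univ j)).trans <|
    single_le_sum (f := fun i => ∑ j, A i j) (fun i _ => sum_nonneg fun j _ => hA i j)
      (mem_univ i)

lemma entrySum_mul_le [Fintype l] {A : Matrix l m ℝ} {B : Matrix m n ℝ} (hA : ∀ i k, 0 ≤ A i k)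
    (hB : ∀ k j, 0 ≤ B k j) : (A * B).entrySum ≤ A.entrySum * B.entrySum := calc
  (A * B).entrySum = ∑ i, ∑ k, A i k * ∑ j, B k j := by
    simp only [entrySum, mul_apply, mul_sum]
    exact sum_congr rfl fun i _ => sum_comm
  _ ≤ ∑ i, ∑ k, A i k * B.entrySum := by
    gcongr with i _ k _
    · exact hA i k
    · exact single_le_sum (f := fun k => ∑ j, B k j) (fun k _ => sum_nonneg fun j _ => hB k j)
        (mem_univ k)
  _ = A.entrySum * B.entrySum := by simp only [entrySum, sum_mul]

lemma mul_mul_entrySum_le_mul_mul_apply {A : Matrix l m ℝ} {B : Matrix m n ℝ} {C : Matrix n o ℝ}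
    {c : ℝ} (hc : 0 ≤ c) (hA : ∀ i k, c ≤ A i k) (hB : ∀ k k', 0 ≤ B k k')
    (hC : ∀ k j, c ≤ C k j) (i : l) (j : o) : c * c * B.entrySum ≤ (A * B * C) i j := calc
  c * c * B.entrySum = ∑ k, ∑ k', c * B k k' * c := by
    simp only [entrySum, mul_sum]
    exact sum_congr rfl fun k _ => sum_congr rfl fun k' _ => by ring
  _ ≤ ∑ k, ∑ k', A i k * B k k' * C k' j := by
    gcongr with k _ k' _
    · exact mul_nonneg (hc.trans (hA i k)) (hB k k')
    · exact hB k k'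
    · exact hA i k
    · exact hC k' j
  _ = (A * B * C) i j := by
    simp only [mul_apply, sum_mul]
    exact sum_comm

lemma mulVec_apply_le_entrySum_mul {A : Matrix m n ℝ} {g : n → ℝ}
    (hA : ∀ i j, 0 ≤ A i j) (hg : ∀ j, 0 ≤ g j) (i : m) :
    (A *ᵥ g) i ≤ A.entrySum * ∑ j, g j := by
  rw [mul_sum]
  exact sum_le_sum fun j _ => mul_le_mul_of_nonneg_right (apply_le_entrySum hA i j) (hg j)

end EntrySum

section Primitive

variable {ι : Type*} [Fintype ι] [DecidableEq ι]

lemma pow_apply_pos_iff_of_pos_iff {A B : Matrix ι ι ℝ} (hA : ∀ i j, 0 ≤ A i j)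
    (hB : ∀ i j, 0 ≤ B i j) (h : ∀ i j, 0 < A i j ↔ 0 < B i j) (k : ℕ) (i j : ι) :
    0 < (A ^ k) i j ↔ 0 < (B ^ k) i j := by
  have hquiver : toQuiver A = toQuiver B := by simp only [toQuiver, h]
  rw [pow_apply_pos_iff_nonempty_path hA, pow_apply_pos_iff_nonempty_path hB, hquiver]

lemma IsPrimitive.of_pos_iff {A B : Matrix ι ι ℝ} (hA : A.IsPrimitive) (hB : ∀ i j, 0 ≤ B i j)
    (h : ∀ i j, 0 < A i j ↔ 0 < B i j) : B.IsPrimitive := by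
  obtain ⟨k, hk, hpos⟩ := hA.exists_pos_pow
  exact ⟨hB, k, hk, fun i j =>
    (pow_apply_pos_iff_of_pos_iff hA.nonneg hB h k i j).1 (hpos i j)⟩

lemma IsPrimitive.exists_pos_le_sum_row [Nonempty ι] {A : Matrix ι ι ℝ} (hA : A.IsPrimitive) :
    ∃ ε > 0, ∀ i, ε ≤ ∑ j, A i j := by
  obtain ⟨k, hk, hpos⟩ := hA.exists_pos_pow
  obtain ⟨i₀, hi₀⟩ := Finite.exists_min fun i => ∑ j, A i j
  refine ⟨∑ j, A i₀ j, ?_, hi₀⟩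
  by_contra! hzero
  have hrow : ∀ j, A i₀ j = 0 := fun j =>
    (sum_eq_zero_iff_of_nonneg fun j _ => hA.nonneg i₀ j).1
      (hzero.antisymm (sum_nonneg fun j _ => hA.nonneg i₀ j)) j (mem_univ j)
  obtain ⟨k, rfl⟩ := Nat.exists_eq_add_of_lt hk
  have := hpos i₀ i₀
  simp [pow_succ', mul_apply, hrow] at this

lemma pow_le_sum_pow_apply {A : Matrix ι ι ℝ} (hA : ∀ i j, 0 ≤ A i j) {ε : ℝ} (hε : 0 ≤ ε)
    (hrow : ∀ i, ε ≤ ∑ j, A i j) (n : ℕ) (i : ι) : ε ^ n ≤ ∑ j, (A ^ n) i j := by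
  induction n generalizing i with
  | zero => simp [one_apply]
  | succ n ih => calc
      ε ^ (n + 1) ≤ (∑ k, A i k) * ε ^ n := by
        rw [pow_succ']; exact mul_le_mul_of_nonneg_right (hrow i) (pow_nonneg hε n)
      _ ≤ ∑ k, A i k * ∑ j, (A ^ n) k j := by
        rw [sum_mul]; exact sum_le_sum fun k _ => mul_le_mul_of_nonneg_left (ih k) (hA i k)
      _ = ∑ j, (A ^ (n + 1)) i j := by
        simp only [pow_succ', mul_apply, mul_sum]
        exact sum_comm

lemma IsPrimitive.exists_pos_pow_le_entrySum_pow [Nonempty ι] {A : Matrix ι ι ℝ}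
    (hA : A.IsPrimitive) : ∃ ε > 0, ∀ n, ε ^ n ≤ (A ^ n).entrySum := by
  obtain ⟨ε, hε, hrow⟩ := hA.exists_pos_le_sum_row
  obtain ⟨i⟩ := ‹Nonempty ι›
  exact ⟨ε, hε, fun n => (pow_le_sum_pow_apply hA.nonneg hε.le hrow n i).trans <|
    single_le_sum (f := fun i => ∑ j, (A ^ n) i j)
      (fun i _ => sum_nonneg fun j _ => pow_apply_nonneg hA.nonneg n i j) (mem_univ i)⟩

lemma IsPrimitive.entrySum_pow_pos [Nonempty ι] {A : Matrix ι ι ℝ} (hA : A.IsPrimitive)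
    (n : ℕ) : 0 < (A ^ n).entrySum := by
  obtain ⟨ε, hε, hlow⟩ := hA.exists_pos_pow_le_entrySum_pow
  exact (pow_pos hε n).trans_le (hlow n)

lemma IsPrimitive.exists_tendsto_log_entrySum_pow_div [Nonempty ι] {A : Matrix ι ι ℝ}
    (hA : A.IsPrimitive) :
    ∃ L, Tendsto (fun n : ℕ => Real.log (A ^ n).entrySum / n) atTop (𝓝 L) := by
  obtain ⟨ε, hε, hlow⟩ := hA.exists_pos_pow_le_entrySum_pow
  have hpos := hA.entrySum_pow_pos
  have hsub : Subadditive fun n => Real.log (A ^ n).entrySum := fun a b => calc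
    Real.log (A ^ (a + b)).entrySum ≤ Real.log ((A ^ a).entrySum * (A ^ b).entrySum) :=
      Real.log_le_log (hpos _) (pow_add A a b ▸
        entrySum_mul_le (pow_apply_nonneg hA.nonneg a) (pow_apply_nonneg hA.nonneg b))
    _ = _ := Real.log_mul (hpos a).ne' (hpos b).ne'
  refine ⟨hsub.lim, hsub.tendsto_lim ⟨min 0 (Real.log ε), ?_⟩⟩
  rintro _ ⟨n, rfl⟩
  rcases n.eq_zero_or_pos with rfl | hn
  · simp
  · refine (min_le_right _ _).trans ((le_div_iff₀ (by exact_mod_cast hn)).2 ?_)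
    rw [mul_comm, ← Real.log_pow]
    exact Real.log_le_log (pow_pos hε n) (hlow n)

lemma IsPrimitive.exists_pos_mul_entrySum_le_pow_apply [Nonempty ι] {A : Matrix ι ι ℝ}
    (hA : A.IsPrimitive) :
    ∃ c > 0, ∀ᶠ n in atTop, ∀ i j, c * (A ^ n).entrySum ≤ (A ^ n) i j := by
  obtain ⟨k, -, hpos⟩ := hA.exists_pos_pow
  obtain ⟨⟨a₀, b₀⟩, hmin⟩ := Finite.exists_min fun p : ι × ι => (A ^ k) p.1 p.2
  set c₀ := (A ^ k) a₀ b₀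
  have hS := hA.entrySum_pow_pos (k + k)
  refine ⟨c₀ * c₀ / (A ^ (k + k)).entrySum, div_pos (mul_pos (hpos _ _) (hpos _ _)) hS,
    eventually_atTop.2 ⟨k + k, fun n hn i j => ?_⟩⟩
  obtain ⟨r, rfl⟩ := Nat.exists_eq_add_of_le hn
  -- `A ^ (k + k + r) = A ^ k * A ^ r * A ^ k` has every entry `≥ c₀² ∑ A ^ r`, and by
  -- submultiplicativity `∑ A ^ r ≥ ∑ A ^ (k + k + r) / ∑ A ^ (k + k)`.
  calc _ ≤ c₀ * c₀ * (A ^ r).entrySum := by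
        rw [div_mul_eq_mul_div, div_le_iff₀ hS, pow_add A (k + k), mul_assoc _ (A ^ r).entrySum,
          mul_comm (A ^ r).entrySum]
        exact mul_le_mul_of_nonneg_left
          (entrySum_mul_le (pow_apply_nonneg hA.nonneg _) (pow_apply_nonneg hA.nonneg _))
          (mul_self_nonneg _)
    _ ≤ (A ^ k * A ^ r * A ^ k) i j :=
        mul_mul_entrySum_le_mul_mul_apply (hpos _ _).le (fun a b => hmin (a, b))
          (pow_apply_nonneg hA.nonneg r) (fun a b => hmin (a, b)) i j
    _ = (A ^ (k + k + r)) i j := by rw [← pow_add, ← pow_add, add_right_comm]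

theorem IsPrimitive.exists_tendsto_pow_mulVec_rpow_inv [Nonempty ι] {A : Matrix ι ι ℝ}
    (hA : A.IsPrimitive) :
    ∃ k > 0, ∀ i (g : ι → ℝ), (∀ j, 0 ≤ g j) → g ≠ 0 →
      Tendsto (fun n : ℕ => (A ^ n *ᵥ g) i ^ (n : ℝ)⁻¹) atTop (𝓝 k) := by
  obtain ⟨L, hL⟩ := hA.exists_tendsto_log_entrySum_pow_div
  obtain ⟨c, hc, hlow⟩ := hA.exists_pos_mul_entrySum_le_pow_apply
  refine ⟨Real.exp L, Real.exp_pos L, fun i g hg hg0 => ?_⟩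
  obtain ⟨j, hj⟩ := Function.ne_iff.1 hg0
  refine tendsto_rpow_inv_of_le_of_le (c₂ := ∑ j, g j) hL hA.entrySum_pow_pos
    (mul_pos hc ((hg j).lt_of_ne' hj)) ?_
  filter_upwards [hlow] with n hn
  have hAn := pow_apply_nonneg hA.nonneg n
  refine ⟨?_, (mulVec_apply_le_entrySum_mul hAn hg i).trans_eq (mul_comm _ _)⟩
  calc c * g j * (A ^ n).entrySum = c * (A ^ n).entrySum * g j := mul_right_comm _ _ _
    _ ≤ (A ^ n) i j * g j := mul_le_mul_of_nonneg_right (hn i j) (hg j)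
    _ ≤ (A ^ n *ᵥ g) i := apply_mul_le_mulVec_apply hAn hg i j

end Primitive

section Paths

variable {ι R : Type*} [CommSemiring R]

-- The path `i → x 0 → ⋯ → x (n - 1)`: `x k` is the state at time `k + 1`.
def pathWeight (A : Matrix ι ι R) (i : ι) {n : ℕ} (x : Fin n → ι) : R :=
  ∏ k : Fin n, A ((Fin.cons i x : Fin (n + 1) → ι) k.castSucc) (x k)

lemma pathWeight_cons (A : Matrix ι ι R) (i j : ι) {n : ℕ} (x : Fin n → ι) :
    A.pathWeight i (Fin.cons j x : Fin (n + 1) → ι) = A i j * A.pathWeight j x := by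
  simp [pathWeight, Fin.prod_univ_succ]

lemma pathWeight_nonneg {A : Matrix ι ι ℝ} (hA : ∀ a b, 0 ≤ A a b) (i : ι) {n : ℕ}
    (x : Fin n → ι) : 0 ≤ A.pathWeight i x :=
  prod_nonneg fun _ _ => hA _ _

lemma sum_pathWeight_mul [Fintype ι] [DecidableEq ι] (A : Matrix ι ι R) (g : ι → R) (n : ℕ)
    (i : ι) :
    ∑ x : Fin n → ι, A.pathWeight i x * g ((Fin.cons i x : Fin (n + 1) → ι) (Fin.last n)) =
      (A ^ n *ᵥ g) i := by
  induction n generalizing i with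
  | zero => simp [pathWeight]
  | succ n ih => calc
    _ = ∑ j, ∑ y : Fin n → ι, A.pathWeight i (Fin.cons j y : Fin (n + 1) → ι) *
          g ((Fin.cons i (Fin.cons j y : Fin (n + 1) → ι) : Fin (n + 2) → ι) (Fin.last (n + 1))) :=
        (Fintype.sum_equiv (Fin.consEquiv fun _ => ι) _ _ fun _ => rfl).symm.trans
          (Fintype.sum_prod_type _)
    _ = ∑ j, A i j * (A ^ n *ᵥ g) j := by
        simp only [pathWeight_cons, ← Fin.succ_last, Fin.cons_succ, mul_assoc, ← mul_sum, ih]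
    _ = (A ^ (n + 1) *ᵥ g) i := by rw [pow_succ', ← mulVec_mulVec]; rfl

end Paths

end Matrix

section MarkovChain

variable {ι : Type*}

-- `x k` prescribes `X (k + 1)`; the weight is `P(i, x 0) P(x 0, x 1) ⋯ P(x (n-2), x (n-1))`.
def IsMarkovChainFrom {Ω : Type*} [MeasurableSpace Ω] (μ : Measure Ω) (X : ℕ → Ω → ι)
    (P : ι → ι → ℝ) (i : ι) : Prop :=
  ∀ (n : ℕ) (x : ℕ → ι), μ {ω | X 0 ω = i ∧ ∀ k < n, X (k + 1) ω = x k} =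
    ENNReal.ofReal (∏ k ∈ range n, P (if k = 0 then i else x (k - 1)) (x k))

lemma prod_range_eq_pathWeight (P : ι → ι → ℝ) (i : ι) (x : ℕ → ι) (n : ℕ) :
    ∏ k ∈ range n, P (if k = 0 then i else x (k - 1)) (x k) =
      (Matrix.of P).pathWeight i (fun k : Fin n => x k) := by
  rw [Matrix.pathWeight, ← Fin.prod_univ_eq_prod_range]
  refine prod_congr rfl fun ⟨k, hk⟩ _ => ?_
  rcases k with _ | k
  · simp
  · simp only [Nat.add_one_ne_zero, if_false, Nat.add_sub_cancel, Matrix.of_apply]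
    rfl

variable [Fintype ι] [MeasurableSpace ι] [MeasurableSingletonClass ι]
  {Ω : Type*} [MeasurableSpace Ω]
  {μ : Measure Ω} [IsProbabilityMeasure μ] {X : ℕ → Ω → ι} {P : ι → ι → ℝ} {i : ι}

lemma integral_comp_eq_sum_pathWeight (hX : ∀ n, Measurable (X n)) (hP : ∀ a b, 0 ≤ P a b)
    (hchain : IsMarkovChainFrom μ X P i) (n : ℕ) (F : (Fin (n + 1) → ι) → ℝ) :
    ∫ ω, F (fun k => X k ω) ∂μ =
      ∑ x : Fin n → ι, (Matrix.of P).pathWeight i x * F (Fin.cons i x) := by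
  have hstart : ∀ᵐ ω ∂μ, X 0 ω = i := by
    have h := hchain 0 fun _ => i
    simp only [not_lt_zero, IsEmpty.forall_iff, implies_true, and_true, range_zero, prod_empty,
      ENNReal.ofReal_one] at h
    exact (prob_compl_eq_zero_iff (hX 0 (measurableSet_singleton i))).2 h
  set Y : Ω → Fin n → ι := fun ω k => X (k + 1) ω
  have hY : Measurable Y := measurable_pi_lambda _ fun k => hX _
  have hlaw : ∀ x, μ (Y ⁻¹' {x}) = ENNReal.ofReal ((Matrix.of P).pathWeight i x) := by
    intro x
    obtain ⟨x', rfl⟩ : ∃ x' : ℕ → ι, (fun k : Fin n => x' k) = x :=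
      ⟨fun k => if h : k < n then x ⟨k, h⟩ else i, by ext; simp⟩
    rw [← prod_range_eq_pathWeight, ← hchain, ← measure_inter_conull hstart]
    congr 1
    ext ω
    simp [Y, funext_iff, Fin.forall_iff, and_comm]
  calc ∫ ω, F (fun k => X k ω) ∂μ = ∫ ω, F (Fin.cons i (Y ω)) ∂μ := by
        refine integral_congr_ae (hstart.mono fun ω h => congrArg F ?_)
        funext k
        cases k using Fin.cases <;> simp [Y, h]
    _ = ∫ x, F (Fin.cons i x) ∂(μ.map Y) :=
        (integral_map (f := fun x => F (Fin.cons i x)) hY.aemeasurable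
          (measurable_of_countable _).aestronglyMeasurable).symm
    _ = _ := by
        rw [integral_fintype .of_finite]
        refine sum_congr rfl fun x _ => ?_
        rw [measureReal_def, Measure.map_apply hY (measurableSet_singleton x), hlaw,
          ENNReal.toReal_ofReal (Matrix.pathWeight_nonneg (A := Matrix.of P) hP i x), smul_eq_mul]

end MarkovChain

open scoped Matrix

namespace Stmt12

section Tilted

variable {ι : Type*}

noncomputable def tilted (P : ι → ι → ℝ) (ρ : ι → ℝ) (lam : ℝ) : Matrix ι ι ℝ :=
  Matrix.of fun a b => P a b * Real.exp (lam * ρ b)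

lemma pathWeight_tilted (P : ι → ι → ℝ) (ρ : ι → ℝ) (lam : ℝ) (i : ι) {n : ℕ}
    (x : Fin n → ι) :
    (tilted P ρ lam).pathWeight i x =
      (Matrix.of P).pathWeight i x * Real.exp (lam * ∑ k, ρ (x k)) := by
  simp [tilted, Matrix.pathWeight, prod_mul_distrib, mul_sum, Real.exp_sum]

variable [Fintype ι] [DecidableEq ι]

lemma Primitive.isPrimitive {P : ι → ι → ℝ} (h : Primitive P) (hP : ∀ a b, 0 ≤ P a b) :
    (Matrix.of P).IsPrimitive :=
  let ⟨k₀, hk₀, hpos⟩ := h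
  ⟨hP, k₀, hk₀, hpos⟩

lemma isPrimitive_tilted {P : ι → ι → ℝ} (hP : (Matrix.of P).IsPrimitive) (ρ : ι → ℝ)
    (lam : ℝ) :
    (tilted P ρ lam).IsPrimitive :=
  hP.of_pos_iff (fun a b => mul_nonneg (hP.nonneg a b) (Real.exp_pos _).le) fun a b => by
    simp [tilted, mul_pos_iff_of_pos_right (Real.exp_pos _)]

variable [MeasurableSpace ι] [MeasurableSingletonClass ι] {Ω : Type*} [MeasurableSpace Ω]
  {μ : Measure Ω} [IsProbabilityMeasure μ] {X : ℕ → Ω → ι} {P : ι → ι → ℝ} {i : ι}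

lemma integral_exp_mul_eq_tilted_pow_mulVec (hX : ∀ n, Measurable (X n))
    (hP : ∀ a b, 0 ≤ P a b) (hchain : IsMarkovChainFrom μ X P i) (ρ : ι → ℝ) (lam : ℝ)
    (g : ι → ℝ) (n : ℕ) :
    ∫ ω, Real.exp (lam * ∑ m ∈ range n, ρ (X (m + 1) ω)) * g (X n ω) ∂μ =
      (tilted P ρ lam ^ n *ᵥ g) i := by
  rw [← Matrix.sum_pathWeight_mul]
  convert integral_comp_eq_sum_pathWeight hX hP hchain n
    (fun y => Real.exp (lam * ∑ m : Fin n, ρ (y m.succ)) * g (y (Fin.last n))) using 1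
  · simp [← Fin.sum_univ_eq_sum_range]
  · simp [pathWeight_tilted, mul_assoc]

end Tilted

theorem exists_spectral_limit_general
    {𝕏 : Type*} [Fintype 𝕏] [Nonempty 𝕏] [DecidableEq 𝕏]
    [MeasurableSpace 𝕏] [MeasurableSingletonClass 𝕏]
    (P : 𝕏 → 𝕏 → ℝ)
    (hP_nonneg : ∀ i j, 0 ≤ P i j)
    (ρ : 𝕏 → ℝ)
    {Ω : Type*} [MeasurableSpace Ω]
    (Pr : 𝕏 → Measure Ω) (hPr : ∀ i, IsProbabilityMeasure (Pr i))
    (X : ℕ → Ω → 𝕏) (hX : ∀ n, Measurable (X n))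
    -- (X_n) is, under ℙ_i, the Markov chain with transition matrix P started at i:
    (hchain : ∀ i (n : ℕ) (x : ℕ → 𝕏),
      Pr i {ω | X 0 ω = i ∧ ∀ k < n, X (k + 1) ω = x k} =
        ENNReal.ofReal (∏ k ∈ Finset.range n, P (if k = 0 then i else x (k - 1)) (x k)))
    (hprim : Primitive P) :
    ∀ lam : ℝ, ∃ k : ℝ, 0 < k ∧
      ∀ i (g : 𝕏 → ℝ), (∀ j, 0 ≤ g j) → g ≠ 0 →
        Tendsto
          (fun n : ℕ =>
            (∫ ω, Real.exp (lam * ∑ m ∈ Finset.range n, ρ (X (m + 1) ω)) * g (X n ω) ∂(Pr i))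
              ^ ((n : ℝ)⁻¹))
          atTop (𝓝 k) := by
  intro lam
  obtain ⟨k, hk, hlim⟩ :=
    (isPrimitive_tilted (hprim.isPrimitive hP_nonneg) ρ lam).exists_tendsto_pow_mulVec_rpow_inv
  refine ⟨k, hk, fun i g hg hg0 => ?_⟩
  have := hPr i
  simpa only [integral_exp_mul_eq_tilted_pow_mulVec hX hP_nonneg (hchain i)] using
    hlim i g hg hg0

theorem exists_spectral_limit
    {𝕏 : Type*} [Fintype 𝕏] [Nonempty 𝕏] [DecidableEq 𝕏]
    [MeasurableSpace 𝕏] [MeasurableSingletonClass 𝕏]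
    (P : 𝕏 → 𝕏 → ℝ)
    (hP_nonneg : ∀ i j, 0 ≤ P i j) (hP_row : ∀ i, ∑ j, P i j = 1)
    (ρ : 𝕏 → ℝ)
    {Ω : Type*} [MeasurableSpace Ω]
    (Pr : 𝕏 → Measure Ω) (hPr : ∀ i, IsProbabilityMeasure (Pr i))
    (X : ℕ → Ω → 𝕏) (hX : ∀ n, Measurable (X n))
    -- (X_n) is, under ℙ_i, the Markov chain with transition matrix P started at i:
    (hchain : ∀ i (n : ℕ) (x : ℕ → 𝕏),
      Pr i {ω | X 0 ω = i ∧ ∀ k < n, X (k + 1) ω = x k} =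
        ENNReal.ofReal (∏ k ∈ Finset.range n, P (if k = 0 then i else x (k - 1)) (x k)))
    (hprim : Primitive P) :
    ∀ lam : ℝ, ∃ k : ℝ, 0 < k ∧
      ∀ i (g : 𝕏 → ℝ), (∀ j, 0 ≤ g j) → g ≠ 0 →
        Tendsto
          (fun n : ℕ =>
            (∫ ω, Real.exp (lam * ∑ m ∈ Finset.range n, ρ (X (m + 1) ω)) * g (X n ω) ∂(Pr i))
              ^ ((n : ℝ)⁻¹))
          atTop (𝓝 k) :=
  exists_spectral_limit_general P hP_nonneg ρ Pr hPr X hX hchain hprim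

end Stmt12
end

section
/- First-derivative identity for the Perron eigenvalue (Lemma 3.13, equation for K'). Fix λ₀ ∈ ℝ. Suppose λ ↦ k(λ) ∈ (0,∞) and λ ↦ v_λ(i) (for each i ∈ 𝕏) are differentiable at λ₀, with P_λ v_λ = k(λ) v_λ for all λ in a neighbourhood of λ₀, where P_λ g(i) = Σ_j P(i,j) e^{λρ(j)} g(j). Suppose ν is a linear functional on functions 𝕏 → ℝ such that ν(P_{λ₀} g) = k(λ₀) ν(g) for every g and ν(v_{λ₀}) = 1. Then k'(λ₀) = k(λ₀) · ν(ρ · v_{λ₀}); equivalently, (ln k)'(λ₀) = ν̃(ρ) where ν̃(g) := ν(g · v_{λ₀}). -/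
/-! Differentiating the eigen-equation `P_λ v_λ = k(λ) v_λ` at `λ₀` gives
`P_{λ₀}(ρ v_{λ₀}) + P_{λ₀} v' = k'(λ₀) v_{λ₀} + k(λ₀) v'`. Applying the left eigenvector `ν`
turns `ν(P_{λ₀} v')` into `k(λ₀) ν(v')`, which cancels, and `ν(v_{λ₀}) = 1` leaves
`k(λ₀) ν(ρ v_{λ₀}) = k'(λ₀)`. -/

open Finset Filter Topology

noncomputable def transferOp {𝕏 : Type*} [Fintype 𝕏] (P : 𝕏 → 𝕏 → ℝ) (ρ : 𝕏 → ℝ) (l : ℝ)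
    (g : 𝕏 → ℝ) : 𝕏 → ℝ :=
  fun i => ∑ j, P i j * Real.exp (l * ρ j) * g j

section TransferOp

variable {𝕏 : Type*} [Fintype 𝕏] (P : 𝕏 → 𝕏 → ℝ) (ρ : 𝕏 → ℝ)

theorem hasDerivAt_transferOp_apply {v : ℝ → 𝕏 → ℝ} {v' : 𝕏 → ℝ} {l₀ : ℝ}
    (hv : ∀ j, HasDerivAt (fun l => v l j) (v' j) l₀) (i : 𝕏) :
    HasDerivAt (fun l => transferOp P ρ l (v l) i)
      (transferOp P ρ l₀ (ρ * v l₀) i + transferOp P ρ l₀ v' i) l₀ := by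
  simp only [transferOp, ← sum_add_distrib]
  refine HasDerivAt.fun_sum fun j _ => ?_
  have hexp : HasDerivAt (fun l => Real.exp (l * ρ j)) (Real.exp (l₀ * ρ j) * ρ j) l₀ := by
    simpa using ((hasDerivAt_id l₀).mul_const (ρ j)).exp
  refine ((hexp.const_mul (P i j)).fun_mul (hv j)).congr_deriv ?_
  simp only [Pi.mul_apply]
  ring

theorem transferOp_deriv_eigen {k : ℝ → ℝ} {k' : ℝ} {v : ℝ → 𝕏 → ℝ} {v' : 𝕏 → ℝ} {l₀ : ℝ}
    (hk : HasDerivAt k k' l₀) (hv : ∀ j, HasDerivAt (fun l => v l j) (v' j) l₀)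
    (heig : ∀ᶠ l in 𝓝 l₀, transferOp P ρ l (v l) = k l • v l) :
    transferOp P ρ l₀ (ρ * v l₀) + transferOp P ρ l₀ v' = k' • v l₀ + k l₀ • v' := by
  funext i
  have hrhs : HasDerivAt (fun l => transferOp P ρ l (v l) i) (k' * v l₀ i + k l₀ * v' i) l₀ :=
    (hk.mul (hv i)).congr_of_eventuallyEq (heig.mono fun l hl => congrFun hl i)
  exact (hasDerivAt_transferOp_apply P ρ hv i).unique hrhs

end TransferOp

theorem eq_mul_of_left_eigenvector {R M : Type*} [CommRing R] [AddCommGroup M] [Module R M]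
    (T : M → M) (ν : M →ₗ[R] R) {c k' : R} {u a b : M}
    (hν : ∀ g, ν (T g) = c * ν g) (hu : ν u = 1) (h : T a + T b = k' • u + c • b) :
    k' = c * ν a := by
  have hνh := congrArg ν h
  simp only [map_add, map_smul, hν, hu, smul_eq_mul] at hνh
  linear_combination -hνh

theorem perron_eigenvalue_derivative_general
    {𝕏 : Type*} [Fintype 𝕏]
    (P : 𝕏 → 𝕏 → ℝ) (ρ : 𝕏 → ℝ)
    (lam₀ : ℝ) (k : ℝ → ℝ) (v : ℝ → 𝕏 → ℝ)
    (k' : ℝ) (hk_deriv : HasDerivAt k k' lam₀)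
    (v' : 𝕏 → ℝ) (hv_deriv : ∀ i, HasDerivAt (fun l => v l i) (v' i) lam₀)
    (heig : ∀ᶠ l in 𝓝 lam₀, ∀ i, ∑ j, P i j * Real.exp (l * ρ j) * v l j = k l * v l i)
    (ν : (𝕏 → ℝ) → ℝ) (hν_lin : IsLinearMap ℝ ν)
    (hν_eig : ∀ g : 𝕏 → ℝ,
      ν (fun i => ∑ j, P i j * Real.exp (lam₀ * ρ j) * g j) = k lam₀ * ν g)
    (hν_norm : ν (v lam₀) = 1) :
    k' = k lam₀ * ν (fun i => ρ i * v lam₀ i) :=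
  eq_mul_of_left_eigenvector (transferOp P ρ lam₀) (hν_lin.mk' ν) hν_eig hν_norm
    (transferOp_deriv_eigen P ρ hk_deriv hv_deriv (heig.mono fun _ hl => funext hl))

theorem perron_eigenvalue_derivative
    {𝕏 : Type*} [Fintype 𝕏] [Nonempty 𝕏]
    (P : 𝕏 → 𝕏 → ℝ) (ρ : 𝕏 → ℝ)
    (hP_nonneg : ∀ i j, 0 ≤ P i j) (hP_row : ∀ i, ∑ j, P i j = 1)
    (lam₀ : ℝ) (k : ℝ → ℝ) (v : ℝ → 𝕏 → ℝ)
    (hk_pos : ∀ l, 0 < k l)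
    (k' : ℝ) (hk_deriv : HasDerivAt k k' lam₀)
    (v' : 𝕏 → ℝ) (hv_deriv : ∀ i, HasDerivAt (fun l => v l i) (v' i) lam₀)
    (heig : ∀ᶠ l in 𝓝 lam₀, ∀ i, ∑ j, P i j * Real.exp (l * ρ j) * v l j = k l * v l i)
    (ν : (𝕏 → ℝ) → ℝ) (hν_lin : IsLinearMap ℝ ν)
    (hν_eig : ∀ g : 𝕏 → ℝ,
      ν (fun i => ∑ j, P i j * Real.exp (lam₀ * ρ j) * g j) = k lam₀ * ν g)
    (hν_norm : ν (v lam₀) = 1) :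
    k' = k lam₀ * ν (fun i => ρ i * v lam₀ i) :=
  perron_eigenvalue_derivative_general P ρ lam₀ k v k' hk_deriv v' hv_deriv heig ν hν_lin hν_eig
    hν_norm
end

section
/- Exponential-moment bound under the conditioned measure (Lemma 3.8, raw form). Let V : 𝕏 × ℝ → [0,∞) and suppose: (G) there is c₀ with V(i,y) ≤ c₀(1 + max(y,0)) for all (i,y); (L) there is C such that for every a > 0, every y ∈ ℝ, every z ≥ 0, every n ≥ 1 and every ψ : 𝕏 → [0,∞): sup_{i∈𝕏} 𝔼_i( ψ(X_n) ; y + S_n ∈ [z, z+a], τ_y > n ) ≤ C (1 + a³) n^{−3/2} ‖ψ‖_∞ (1 + z)(1 + max(y,0)). Then there is a constant C′ (depending only on c₀ and C) such that for every (i,y) ∈ 𝕏 × ℝ and every k ≥ 1: 𝔼_i( e^{−S_k} V(X_k, y + S_k) ; τ_y > k ) ≤ C′ (1 + max(y,0)) e^{y} k^{−3/2}; consequently Σ_{k=1}^∞ 𝔼_i( e^{−S_k} V(X_k, y + S_k) ; τ_y > k ) ≤ C′ (1 + max(y,0)) e^{y}. -/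
/-!
Split the event {τ_y > k} according to the integer part m of y + S_k. On the m-th piece
e^{-S_k} ≤ e^{y-m} and, by (G), V ≤ c₀ (2 + m), while (L) with a = 1 and ψ = 1 bounds its
probability by 2C (1 + m)(1 + y⁺) k^{-3/2}. Hence the k-th term is at most a multiple of
(1 + y⁺) e^y k^{-3/2} ∑ₘ (1 + m)(2 + m) e^{-m}, and summing over k costs a factor ∑ₖ k^{-3/2}.
-/

open Finset Filter MeasureTheory

namespace Stmt19

variable {𝕏 : Type*}

/-- the Markov walk S_n = ρ(X_1) + ⋯ + ρ(X_n). -/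
noncomputable def walk (ρ : 𝕏 → ℝ) {Ω : Type*} (X : ℕ → Ω → 𝕏) (n : ℕ) (ω : Ω) : ℝ :=
  ∑ k ∈ Finset.range n, ρ (X (k + 1) ω)

/-- the event {τ_y > n} = {∀ k, 1 ≤ k ≤ n → y + S_k > 0}. -/
def surv (ρ : 𝕏 → ℝ) {Ω : Type*} (X : ℕ → Ω → 𝕏) (y : ℝ) (n : ℕ) : Set Ω :=
  {ω | ∀ k, 1 ≤ k → k ≤ n → 0 < y + walk ρ X k ω}

section GeneralFacts

variable {Ω : Type*} [MeasurableSpace Ω] {μ : Measure Ω}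

theorem setIntegral_le_tsum_of_le_on_fibers [IsFiniteMeasure μ] {s : Set Ω}
    (hs : MeasurableSet s) {N : Ω → ℕ} (hN : Measurable N) {f : Ω → ℝ} {a b : ℕ → ℝ}
    (hb : ∀ m, 0 ≤ b m) (hfb : ∀ ω ∈ s, f ω ≤ b (N ω))
    (ha : ∀ m, μ.real (s ∩ N ⁻¹' {m}) ≤ a m) (hab : Summable fun m => a m * b m) :
    ∫ ω in s, f ω ∂μ ≤ ∑' m, a m * b m := by
  by_cases hf : IntegrableOn f s μ
  swap
  · rw [integral_undef hf]
    exact tsum_nonneg fun m => mul_nonneg (measureReal_nonneg.trans (ha m)) (hb m)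
  set t : ℕ → Set Ω := fun m => s ∩ N ⁻¹' {m}
  have ht : ∀ m, MeasurableSet (t m) := fun m => hs.inter (hN (measurableSet_singleton m))
  have hst : ⋃ m, t m = s := by
    rw [← Set.inter_iUnion, ← Set.preimage_iUnion, Set.iUnion_singleton_eq_range,
      Set.range_id', Set.preimage_univ, Set.inter_univ]
  have hdisj : Pairwise (Function.onFun Disjoint t) :=
    (pairwise_disjoint_fiber N).mono fun _ _ h => h.mono Set.inter_subset_right
      Set.inter_subset_right
  have hsum := hasSum_integral_iUnion ht hdisj (hst ▸ hf)
  rw [hst] at hsum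
  refine hasSum_le (fun m => ?_) hsum hab.hasSum
  calc ∫ ω in t m, f ω ∂μ ≤ ∫ _ in t m, b m ∂μ :=
        setIntegral_mono_on (hf.mono_set Set.inter_subset_left) integrableOn_const (ht m)
          fun ω hω => hω.2 ▸ hfb ω hω.1
    _ = μ.real (t m) * b m := by rw [setIntegral_const, smul_eq_mul]
    _ ≤ a m * b m := mul_le_mul_of_nonneg_right (ha m) (hb m)

theorem tsum_succ_le_of_le_div_rpow {u : ℕ → ℝ} (hu0 : ∀ k, 0 ≤ u k) {c p : ℝ} (hp : 1 < p)
    (hu : ∀ k, 1 ≤ k → u k ≤ c / (k : ℝ) ^ p) :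
    ∑' k, u (k + 1) ≤ c * ∑' k : ℕ, 1 / ((k : ℝ) + 1) ^ p := by
  have hle : ∀ k : ℕ, u (k + 1) ≤ c * (1 / ((k : ℝ) + 1) ^ p) := fun k => by
    simpa [div_eq_mul_one_div c] using hu (k + 1) k.succ_pos
  have hsum : Summable fun k : ℕ => 1 / ((k : ℝ) + 1) ^ p := by
    have habs : ∀ k : ℕ, |(k : ℝ) + 1| = k + 1 := fun k => abs_of_pos k.cast_add_one_pos
    simpa only [habs] using (Real.summable_one_div_nat_add_rpow 1 p).2 hp
  rw [← tsum_mul_left]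
  exact (hsum.mul_left c).of_nonneg_of_le (fun k => hu0 _) hle |>.tsum_le_tsum hle
    (hsum.mul_left c)

theorem summable_one_add_mul_two_add_mul_exp_neg :
    Summable fun m : ℕ => (1 + (m : ℝ)) * (2 + m) * Real.exp (-m) := by
  have h := fun k => Real.summable_pow_mul_exp_neg_nat_mul k one_pos
  refine ((h 2).add (((h 1).mul_left 3).add ((h 0).mul_left 2))).congr fun m => ?_
  simp only [neg_mul, one_mul]
  ring

end GeneralFacts

section MarkovWalk

variable {Ω : Type*} [MeasurableSpace Ω] {ρ : 𝕏 → ℝ} {X : ℕ → Ω → 𝕏}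

theorem measurable_walk [MeasurableSpace 𝕏] (hρ : Measurable ρ) (hX : ∀ n, Measurable (X n))
    (n : ℕ) : Measurable (walk ρ X n) :=
  Finset.measurable_sum _ fun k _ => hρ.comp (hX (k + 1))

theorem measurableSet_surv [MeasurableSpace 𝕏] (hρ : Measurable ρ) (hX : ∀ n, Measurable (X n))
    (y : ℝ) (n : ℕ) : MeasurableSet (surv ρ X y n) := by
  have h : surv ρ X y n = ⋂ k, ⋂ (_ : 1 ≤ k), ⋂ (_ : k ≤ n), {ω | 0 < y + walk ρ X k ω} := by
    ext ω
    simp [surv]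
  rw [h]
  exact .iInter fun k => .iInter fun _ => .iInter fun _ =>
    measurableSet_lt measurable_const (measurable_const.add (measurable_walk hρ hX k))

theorem setIntegral_surv_exp_neg_walk_mul_le [MeasurableSpace 𝕏] {μ : Measure Ω}
    [IsFiniteMeasure μ] (hρ : Measurable ρ) (hX : ∀ n, Measurable (X n)) {V : 𝕏 → ℝ → ℝ}
    {c₀ : ℝ} (hc₀ : 0 ≤ c₀) (hG : ∀ i y, V i y ≤ c₀ * (1 + max y 0)) {y D : ℝ} {k : ℕ}
    (hk : 1 ≤ k)
    (hslab : ∀ m : ℕ,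
      μ.real ({ω | y + walk ρ X k ω ∈ Set.Icc (m : ℝ) (m + 1)} ∩ surv ρ X y k) ≤ D * (1 + m)) :
    ∫ ω in surv ρ X y k, Real.exp (-walk ρ X k ω) * V (X k ω) (y + walk ρ X k ω) ∂μ ≤
      D * c₀ * Real.exp y * ∑' m : ℕ, (1 + (m : ℝ)) * (2 + m) * Real.exp (-m) := by
  set b : ℕ → ℝ := fun m => Real.exp y * Real.exp (-m) * (c₀ * (2 + m))
  have hab : (fun m : ℕ => D * (1 + m) * b m) =
      fun m : ℕ => D * c₀ * Real.exp y * ((1 + (m : ℝ)) * (2 + m) * Real.exp (-m)) := by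
    funext m
    ring
  rw [← tsum_mul_left, ← hab]
  refine setIntegral_le_tsum_of_le_on_fibers (N := fun ω => ⌊y + walk ρ X k ω⌋₊)
    (measurableSet_surv hρ hX y k) ((measurable_walk hρ hX k).const_add y).nat_floor
    (fun m => by positivity) ?_ ?_
    (hab ▸ summable_one_add_mul_two_add_mul_exp_neg.mul_left _)
  · intro ω hω
    have ht : 0 ≤ y + walk ρ X k ω := (hω k hk le_rfl).le
    have hexp : Real.exp (-walk ρ X k ω) ≤ Real.exp y * Real.exp (-⌊y + walk ρ X k ω⌋₊) := by
      rw [← Real.exp_add]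
      exact Real.exp_le_exp.2 (by linarith [Nat.floor_le ht])
    have hV : V (X k ω) (y + walk ρ X k ω) ≤ c₀ * (2 + ⌊y + walk ρ X k ω⌋₊) := by
      refine (hG _ _).trans (mul_le_mul_of_nonneg_left ?_ hc₀)
      rw [max_eq_left ht]
      linarith [Nat.lt_floor_add_one (y + walk ρ X k ω)]
    exact (mul_le_mul_of_nonneg_left hV (Real.exp_pos _).le).trans
      (mul_le_mul_of_nonneg_right hexp (by positivity))
  · refine fun m => (measureReal_mono ?_).trans (hslab m)
    rintro ω ⟨hω, hm : ⌊y + walk ρ X k ω⌋₊ = m⟩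
    have ht : 0 ≤ y + walk ρ X k ω := (hω k hk le_rfl).le
    subst hm
    exact ⟨⟨Nat.floor_le ht, (Nat.lt_floor_add_one _).le⟩, hω⟩

end MarkovWalk

theorem exponential_moment_bound_general
    [Fintype 𝕏] [Nonempty 𝕏]
    [MeasurableSpace 𝕏] [MeasurableSingletonClass 𝕏]
    (ρ : 𝕏 → ℝ)
    {Ω : Type*} [MeasurableSpace Ω]
    (Pr : 𝕏 → Measure Ω) (hPr : ∀ i, IsProbabilityMeasure (Pr i))
    (X : ℕ → Ω → 𝕏) (hX : ∀ n, Measurable (X n))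
    (V : 𝕏 → ℝ → ℝ) (hV_nonneg : ∀ i y, 0 ≤ V i y)
    -- (G): growth bound on V
    (c₀ : ℝ)
    (hG : ∀ i y, V i y ≤ c₀ * (1 + max y 0))
    -- (L): local limit type bound
    (C : ℝ)
    (hL : ∀ a : ℝ, 0 < a → ∀ y z : ℝ, 0 ≤ z → ∀ n : ℕ, 1 ≤ n →
      ∀ ψ : 𝕏 → ℝ, (∀ x, 0 ≤ ψ x) → ∀ i,
        ∫ ω in {ω | y + walk ρ X n ω ∈ Set.Icc z (z + a)} ∩ surv ρ X y n,
            ψ (X n ω) ∂(Pr i) ≤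
          C * (1 + a ^ 3) / (n : ℝ) ^ (3 / 2 : ℝ) * (⨆ x, |ψ x|) *
            (1 + z) * (1 + max y 0)) :
    ∃ C' : ℝ, 0 < C' ∧
      (∀ i (y : ℝ) (k : ℕ), 1 ≤ k →
        ∫ ω in surv ρ X y k,
            Real.exp (-(walk ρ X k ω)) * V (X k ω) (y + walk ρ X k ω) ∂(Pr i) ≤
          C' * (1 + max y 0) * Real.exp y / (k : ℝ) ^ (3 / 2 : ℝ)) ∧
      (∀ i (y : ℝ),
        ∑' k : ℕ,
            ∫ ω in surv ρ X y (k + 1),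
              Real.exp (-(walk ρ X (k + 1) ω)) *
                V (X (k + 1) ω) (y + walk ρ X (k + 1) ω) ∂(Pr i) ≤
          C' * (1 + max y 0) * Real.exp y) := by
  obtain ⟨i₀⟩ := ‹Nonempty 𝕏›
  have hc₀ : 0 ≤ c₀ := by simpa using (hV_nonneg i₀ 0).trans (hG i₀ 0)
  have hslab : ∀ i y k, 1 ≤ k → ∀ m : ℕ,
      (Pr i).real ({ω | y + walk ρ X k ω ∈ Set.Icc (m : ℝ) (m + 1)} ∩ surv ρ X y k) ≤
        2 * C / (k : ℝ) ^ (3 / 2 : ℝ) * (1 + max y 0) * (1 + m) := fun i y k hk m => by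
    have h := hL 1 one_pos y m m.cast_nonneg k hk (fun _ => 1) (fun _ => zero_le_one) i
    simp only [setIntegral_const, smul_eq_mul, mul_one, abs_one, ciSup_const, one_pow] at h
    exact h.trans_eq (by ring)
  set A := 2 * C * c₀ * ∑' m : ℕ, (1 + (m : ℝ)) * (2 + m) * Real.exp (-m)
  have hbound : ∀ i y k, 1 ≤ k →
      ∫ ω in surv ρ X y k, Real.exp (-walk ρ X k ω) * V (X k ω) (y + walk ρ X k ω) ∂(Pr i) ≤
        A * (1 + max y 0) * Real.exp y / (k : ℝ) ^ (3 / 2 : ℝ) := fun i y k hk => by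
    have := hPr i
    refine (setIntegral_surv_exp_neg_walk_mul_le (measurable_of_countable ρ) hX hc₀ hG hk
      (hslab i y k hk)).trans_eq ?_
    ring
  set Z := ∑' k : ℕ, 1 / ((k : ℝ) + 1) ^ (3 / 2 : ℝ)
  have hZ : 0 ≤ Z := tsum_nonneg fun k => by positivity
  have hA : A ≤ (max A 0 + 1) * (1 + Z) := by nlinarith [le_max_left A 0, le_max_right A 0]
  have hAZ : A * Z ≤ (max A 0 + 1) * (1 + Z) := by
    nlinarith [mul_le_mul_of_nonneg_right (le_max_left A 0) hZ, le_max_right A 0]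
  refine ⟨(max A 0 + 1) * (1 + Z), by positivity, fun i y k hk => (hbound i y k hk).trans ?_,
    fun i y => ?_⟩
  · gcongr
  · calc _ ≤ A * (1 + max y 0) * Real.exp y * Z :=
          tsum_succ_le_of_le_div_rpow
            (fun k => integral_nonneg fun ω => mul_nonneg (Real.exp_pos _).le (hV_nonneg _ _))
            (by norm_num) (hbound i y)
      _ = A * Z * (1 + max y 0) * Real.exp y := by ring
      _ ≤ _ := by gcongr

theorem exponential_moment_bound
    [Fintype 𝕏] [Nonempty 𝕏]
    [MeasurableSpace 𝕏] [MeasurableSingletonClass 𝕏]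
    (P : 𝕏 → 𝕏 → ℝ)
    (hP_nonneg : ∀ i j, 0 ≤ P i j) (hP_row : ∀ i, ∑ j, P i j = 1)
    (ρ : 𝕏 → ℝ)
    {Ω : Type*} [MeasurableSpace Ω]
    (Pr : 𝕏 → Measure Ω) (hPr : ∀ i, IsProbabilityMeasure (Pr i))
    (X : ℕ → Ω → 𝕏) (hX : ∀ n, Measurable (X n))
    (hchain : ∀ i (n : ℕ) (x : ℕ → 𝕏),
      Pr i {ω | X 0 ω = i ∧ ∀ k < n, X (k + 1) ω = x k} =
        ENNReal.ofReal (∏ k ∈ Finset.range n, P (if k = 0 then i else x (k - 1)) (x k)))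
    (V : 𝕏 → ℝ → ℝ) (hV_nonneg : ∀ i y, 0 ≤ V i y)
    -- (G): growth bound on V
    (c₀ : ℝ)
    (hG : ∀ i y, V i y ≤ c₀ * (1 + max y 0))
    -- (L): local limit type bound
    (C : ℝ)
    (hL : ∀ a : ℝ, 0 < a → ∀ y z : ℝ, 0 ≤ z → ∀ n : ℕ, 1 ≤ n →
      ∀ ψ : 𝕏 → ℝ, (∀ x, 0 ≤ ψ x) → ∀ i,
        ∫ ω in {ω | y + walk ρ X n ω ∈ Set.Icc z (z + a)} ∩ surv ρ X y n,
            ψ (X n ω) ∂(Pr i) ≤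
          C * (1 + a ^ 3) / (n : ℝ) ^ (3 / 2 : ℝ) * (⨆ x, |ψ x|) *
            (1 + z) * (1 + max y 0)) :
    ∃ C' : ℝ, 0 < C' ∧
      (∀ i (y : ℝ) (k : ℕ), 1 ≤ k →
        ∫ ω in surv ρ X y k,
            Real.exp (-(walk ρ X k ω)) * V (X k ω) (y + walk ρ X k ω) ∂(Pr i) ≤
          C' * (1 + max y 0) * Real.exp y / (k : ℝ) ^ (3 / 2 : ℝ)) ∧
      (∀ i (y : ℝ),
        ∑' k : ℕ,
            ∫ ω in surv ρ X y (k + 1),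
              Real.exp (-(walk ρ X (k + 1) ω)) *
                V (X (k + 1) ω) (y + walk ρ X (k + 1) ω) ∂(Pr i) ≤
          C' * (1 + max y 0) * Real.exp y) :=
  exponential_moment_bound_general ρ Pr hPr X hX V hV_nonneg c₀ hG C hL

end Stmt19
end
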